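/- arXiv:2410.07773 — 6 statements merged into one kernel-verified Lean document; each statement's English description precedes it below -/
import Mathlib

section
/- Let α > 1, let ζ be in the unit sphere of ℂ^d, let w ∈ 𝔹_d, and let z ∈ D_α(ζ) with ‖z‖ ≥ ‖w‖, where D_α(ζ) = { z ∈ 𝔹_d : |1 − ⟨z,ζ⟩| < (α/2)(1 − ‖z‖²) }. Then |1 − ⟨ζ,w⟩| and |1 − ⟨z,w⟩| are comparable with constants depending only on α, i.e. there exist c_α, C_α > 0 with c_α|1 − ⟨ζ,w⟩| ≤ |1 − ⟨z,w⟩| ≤ C_α|1 − ⟨ζ,w⟩|. -/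
/-!
The Korányi quantity `√‖1 - ⟪a, b⟫‖` satisfies the triangle inequality on the closed unit ball.
Through a unit vector `c`, write `1 - ⟪a, b⟫ = (1 - ⟪a, c⟫) + ⟪a, c⟫ (1 - ⟪c, b⟫) - ⟪a', b'⟫`
with `a', b'` the components orthogonal to `c`, and bound `‖a'‖² ≤ 2 ‖1 - ⟪a, c⟫‖`; a general
`c` becomes a unit vector of `E × ℂ` after adding the coordinate `√(1 - ‖c‖²)`.
The approach-region condition gives `‖1 - ⟪ζ, z⟫‖ ≤ α (1 - ‖z‖)`, and `1 - ‖z‖` is below both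
`‖1 - ⟪w, ζ⟫‖` and `‖1 - ⟪w, z⟫‖` because `‖w‖ ≤ ‖z‖`. The triangle inequality through `ζ`,
resp. through `z`, then gives both bounds with the constant `(1 + √α)²`.
-/

local notation "⟪" x ", " y "⟫" => @inner ℂ _ _ x y

variable {E : Type*} [NormedAddCommGroup E] [InnerProductSpace ℂ E]

noncomputable def koranyiDist (a b : E) : ℝ := √‖(1 : ℂ) - ⟪a, b⟫‖

lemma koranyiDist_sq (a b : E) : koranyiDist a b ^ 2 = ‖(1 : ℂ) - ⟪a, b⟫‖ :=
  Real.sq_sqrt (norm_nonneg _)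

lemma koranyiDist_nonneg (a b : E) : 0 ≤ koranyiDist a b := Real.sqrt_nonneg _

lemma norm_one_sub_inner_comm (a b : E) : ‖(1 : ℂ) - ⟪a, b⟫‖ = ‖(1 : ℂ) - ⟪b, a⟫‖ := by
  rw [← inner_conj_symm, ← RCLike.norm_conj, map_sub, map_one, RCLike.conj_conj]

lemma koranyiDist_comm (a b : E) : koranyiDist a b = koranyiDist b a := by
  rw [koranyiDist, koranyiDist, norm_one_sub_inner_comm]

lemma one_sub_norm_mul_norm_le_norm_one_sub_inner (a b : E) :
    1 - ‖a‖ * ‖b‖ ≤ ‖(1 : ℂ) - ⟪a, b⟫‖ := by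
  have := norm_sub_norm_le (1 : ℂ) ⟪a, b⟫
  rw [norm_one] at this
  linarith [norm_inner_le_norm (𝕜 := ℂ) a b]

lemma inner_sub_inner_smul_of_norm_eq_one {c : E} (hc : ‖c‖ = 1) (a b : E) :
    ⟪a - ⟪c, a⟫ • c, b - ⟪c, b⟫ • c⟫ = ⟪a, b⟫ - ⟪a, c⟫ * ⟪c, b⟫ := by
  have hcc : ⟪c, c⟫ = 1 := by simp [inner_self_eq_norm_sq_to_K, hc]
  simp only [inner_sub_left, inner_sub_right, inner_smul_left, inner_smul_right, hcc,
    inner_conj_symm]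
  ring

lemma norm_sub_inner_smul_le_sqrt_two_mul_koranyiDist {c x : E} (hc : ‖c‖ = 1) (hx : ‖x‖ ≤ 1) :
    ‖x - ⟪c, x⟫ • c‖ ≤ √2 * koranyiDist x c := by
  have hsq : ‖x - ⟪c, x⟫ • c‖ ^ 2 = ‖x‖ ^ 2 - ‖⟪x, c⟫‖ ^ 2 := by
    have h := inner_sub_inner_smul_of_norm_eq_one hc x x
    rw [inner_self_eq_norm_sq_to_K, inner_self_eq_norm_sq_to_K, ← inner_conj_symm x c,
      RCLike.conj_mul, norm_inner_symm] at h
    exact_mod_cast h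
  have hlow : 1 - ‖⟪x, c⟫‖ ≤ ‖(1 : ℂ) - ⟪x, c⟫‖ := by
    simpa using norm_sub_norm_le (1 : ℂ) ⟪x, c⟫
  rw [koranyiDist, ← Real.sqrt_mul zero_le_two, Real.le_sqrt (norm_nonneg _) (by positivity), hsq]
  nlinarith [sq_nonneg (1 - ‖⟪x, c⟫‖), pow_le_one₀ (n := 2) (norm_nonneg x) hx]

lemma koranyiDist_triangle_of_norm_eq_one {a b c : E} (ha : ‖a‖ ≤ 1) (hb : ‖b‖ ≤ 1)
    (hc : ‖c‖ = 1) : koranyiDist a b ≤ koranyiDist a c + koranyiDist c b := by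
  have hac : ‖⟪a, c⟫‖ ≤ 1 := (norm_inner_le_norm a c).trans (by rw [hc, mul_one]; exact ha)
  have hdecomp : (1 : ℂ) - ⟪a, b⟫ = (1 - ⟪a, c⟫) + ⟪a, c⟫ * (1 - ⟪c, b⟫)
      - ⟪a - ⟪c, a⟫ • c, b - ⟪c, b⟫ • c⟫ := by
    rw [inner_sub_inner_smul_of_norm_eq_one hc]; ring
  have ha' := norm_sub_inner_smul_le_sqrt_two_mul_koranyiDist hc ha
  have hb' := norm_sub_inner_smul_le_sqrt_two_mul_koranyiDist hc hb
  rw [koranyiDist_comm b c] at hb'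
  refine Real.sqrt_le_iff.mpr ⟨add_nonneg (koranyiDist_nonneg a c) (koranyiDist_nonneg c b), ?_⟩
  calc ‖(1 : ℂ) - ⟪a, b⟫‖
      ≤ ‖1 - ⟪a, c⟫‖ + ‖⟪a, c⟫‖ * ‖1 - ⟪c, b⟫‖ + ‖a - ⟪c, a⟫ • c‖ * ‖b - ⟪c, b⟫ • c‖ := by
        rw [hdecomp, ← norm_mul]
        exact (norm_sub_le _ _).trans (add_le_add (norm_add_le _ _) (norm_inner_le_norm _ _))
    _ ≤ ‖1 - ⟪a, c⟫‖ + ‖1 - ⟪c, b⟫‖ + (√2 * koranyiDist a c) * (√2 * koranyiDist c b) := by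
        gcongr
        · exact mul_le_of_le_one_left (norm_nonneg _) hac
        · exact mul_nonneg (Real.sqrt_nonneg 2) (koranyiDist_nonneg a c)
    _ = (koranyiDist a c + koranyiDist c b) ^ 2 := by
        rw [← koranyiDist_sq, ← koranyiDist_sq]
        ring_nf
        rw [Real.sq_sqrt zero_le_two]

lemma koranyiDist_triangle {a b c : E} (ha : ‖a‖ ≤ 1) (hb : ‖b‖ ≤ 1) (hc : ‖c‖ ≤ 1) :
    koranyiDist a b ≤ koranyiDist a c + koranyiDist c b := by
  let lift : E → WithLp 2 (E × ℂ) := fun x => WithLp.toLp 2 (x, 0)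
  let c' : WithLp 2 (E × ℂ) := WithLp.toLp 2 (c, (√(1 - ‖c‖ ^ 2) : ℂ))
  have hlift (x : E) : ‖lift x‖ = ‖x‖ := by simp [lift]
  have hc' : ‖c'‖ = 1 := by
    have h : 0 ≤ 1 - ‖c‖ ^ 2 := by nlinarith [norm_nonneg c]
    simp [c', WithLp.prod_norm_eq_of_L2, abs_of_nonneg, h]
  have key :=
    koranyiDist_triangle_of_norm_eq_one ((hlift a).trans_le ha) ((hlift b).trans_le hb) hc'
  simpa [koranyiDist, lift, c'] using key

lemma norm_one_sub_inner_le_of_le_mul {a b c : E} {p : ℝ} (ha : ‖a‖ ≤ 1) (hb : ‖b‖ ≤ 1)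
    (hc : ‖c‖ ≤ 1) (h : ‖(1 : ℂ) - ⟪c, b⟫‖ ≤ p * ‖(1 : ℂ) - ⟪a, c⟫‖) :
    ‖(1 : ℂ) - ⟪a, b⟫‖ ≤ (1 + √p) ^ 2 * ‖(1 : ℂ) - ⟪a, c⟫‖ := by
  have hcb : koranyiDist c b ≤ √p * koranyiDist a c := by
    rw [koranyiDist, koranyiDist, ← Real.sqrt_mul' _ (norm_nonneg _)]
    exact Real.sqrt_le_sqrt h
  have hab : koranyiDist a b ≤ (1 + √p) * koranyiDist a c := by
    linarith [koranyiDist_triangle ha hb hc]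
  rw [← koranyiDist_sq, ← koranyiDist_sq, ← mul_pow]
  exact pow_le_pow_left₀ (koranyiDist_nonneg a b) hab 2

theorem stmt3_general (α : ℝ) :
    ∃ c C : ℝ, 0 < c ∧ 0 < C ∧
      ∀ (d : ℕ) (ζ w z : EuclideanSpace ℂ (Fin d)),
        ‖ζ‖ = 1 → ‖w‖ < 1 → ‖z‖ < 1 →
        ‖(1 : ℂ) - ⟪ζ, z⟫‖ < α / 2 * (1 - ‖z‖ ^ 2) →
        ‖w‖ ≤ ‖z‖ →
        c * ‖(1 : ℂ) - ⟪w, ζ⟫‖ ≤ ‖(1 : ℂ) - ⟪w, z⟫‖ ∧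
        ‖(1 : ℂ) - ⟪w, z⟫‖ ≤ C * ‖(1 : ℂ) - ⟪w, ζ⟫‖ := by
  refine ⟨((1 + √α) ^ 2)⁻¹, (1 + √α) ^ 2, by positivity, by positivity, ?_⟩
  intro d ζ w z hζ hw hz hzD hwz
  have hz2 : 0 < 1 - ‖z‖ ^ 2 := by nlinarith [norm_nonneg z]
  have hα : 0 < α := by nlinarith [norm_nonneg ((1 : ℂ) - ⟪ζ, z⟫)]
  have hζz : ‖(1 : ℂ) - ⟪ζ, z⟫‖ ≤ α * (1 - ‖z‖) := by
    nlinarith [mul_nonneg hα.le (sq_nonneg (1 - ‖z‖))]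
  have hwz_lower : 1 - ‖z‖ ≤ ‖(1 : ℂ) - ⟪w, z⟫‖ := by
    nlinarith [one_sub_norm_mul_norm_le_norm_one_sub_inner w z, norm_nonneg z]
  have hwζ_lower : 1 - ‖z‖ ≤ ‖(1 : ℂ) - ⟪w, ζ⟫‖ := by
    nlinarith [one_sub_norm_mul_norm_le_norm_one_sub_inner w ζ]
  constructor
  · rw [inv_mul_le_iff₀ (by positivity)]
    refine norm_one_sub_inner_le_of_le_mul hw.le hζ.le hz.le ?_
    rw [norm_one_sub_inner_comm]
    nlinarith
  · refine norm_one_sub_inner_le_of_le_mul hw.le hz.le hζ.le ?_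
    nlinarith

/-- For `α > 1`, `ζ` on the unit sphere of `ℂ^d`, `w ∈ 𝔹_d` and `z ∈ D_α(ζ)` with
`‖z‖ ≥ ‖w‖`, the quantities `|1 − ⟨ζ,w⟩|` and `|1 − ⟨z,w⟩|` are comparable with
constants depending only on `α`. -/
theorem stmt3 (α : ℝ) (hα : 1 < α) :
    ∃ c C : ℝ, 0 < c ∧ 0 < C ∧
      ∀ (d : ℕ) (ζ w z : EuclideanSpace ℂ (Fin d)),
        ‖ζ‖ = 1 → ‖w‖ < 1 → ‖z‖ < 1 →
        ‖(1 : ℂ) - ⟪ζ, z⟫‖ < α / 2 * (1 - ‖z‖ ^ 2) →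
        ‖w‖ ≤ ‖z‖ →
        c * ‖(1 : ℂ) - ⟪w, ζ⟫‖ ≤ ‖(1 : ℂ) - ⟪w, z⟫‖ ∧
        ‖(1 : ℂ) - ⟪w, z⟫‖ ≤ C * ‖(1 : ℂ) - ⟪w, ζ⟫‖ :=
  stmt3_general α
end

section
/- Let α > 1, ζ in the unit sphere of ℂ^d, w ∈ 𝔹_d and z ∈ D_α(ζ) with ‖z‖ ≥ ‖w‖. Then the pluriharmonic Drury–Arveson kernel values k(z,w) and k(ζ,w) are comparable with constants depending only on α, where k(z,w) = (1 − |⟨z,w⟩|²)/|1 − ⟨z,w⟩|². -/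
open Complex

local notation "⟪" x ", " y "⟫" => @inner ℂ _ _ x y

noncomputable def phDAkernel (d : ℕ) (z w : EuclideanSpace ℂ (Fin d)) : ℝ :=
  (1 - ‖⟪w, z⟫‖ ^ 2) / ‖(1 : ℂ) - ⟪w, z⟫‖ ^ 2

lemma pythag {d : ℕ} (ζ v : EuclideanSpace ℂ (Fin d)) (hζ : ‖ζ‖ = 1) :
    ‖v - ⟪ζ, v⟫ • ζ‖ ^ 2 = ‖v‖ ^ 2 - ‖⟪ζ, v⟫‖ ^ 2 := by
  have h := norm_sub_sq (𝕜 := ℂ) v (⟪ζ, v⟫ • ζ)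
  rw [inner_smul_right] at h
  rw [h, norm_smul, hζ]
  have h2 : ⟪v, ζ⟫ = starRingEnd ℂ ⟪ζ, v⟫ := (inner_conj_symm v ζ).symm
  rw [h2]
  have h3 : RCLike.re (⟪ζ, v⟫ * starRingEnd ℂ ⟪ζ, v⟫) = ‖⟪ζ, v⟫‖ ^ 2 := by
    rw [Complex.mul_conj]
    rw [show RCLike.re ((Complex.normSq ⟪ζ, v⟫ : ℝ) : ℂ) = Complex.normSq ⟪ζ, v⟫ from
      Complex.ofReal_re _]
    rw [← Complex.sq_norm]
  rw [h3]; ring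

section arith

lemma arA1 (α ne nz de q : ℝ) (h1 : q ^ 2 = nz ^ 2 - ne ^ 2) (h2 : ne ≤ nz)
    (h3 : 0 ≤ ne) (h4 : nz < 1) (h5 : 1 - ne ≤ de) (h6 : de ≤ α / 2 * (1 - nz ^ 2)) :
    q ^ 2 ≤ α * (1 - nz ^ 2) := by
  nlinarith [mul_le_mul_of_nonneg_right h5 (by linarith : (0:ℝ) ≤ 1 + ne),
    mul_nonneg (by linarith : (0:ℝ) ≤ de) (by linarith : (0:ℝ) ≤ 1 - ne)]

lemma arA2 (na nw nz : ℝ) (h : na ≤ nw * nz) (hwz : nw ≤ nz) (h0w : 0 ≤ nw)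
    (h0z : 0 ≤ nz) (hz : nz ≤ 1) (h0a : 0 ≤ na) : 1 - nz ^ 2 ≤ 1 - na ^ 2 := by
  have h1 : na ≤ nz * nz := h.trans (mul_le_mul_of_nonneg_right hwz h0z)
  nlinarith [mul_le_mul h1 h1 h0a (mul_nonneg h0z h0z),
    mul_nonneg (mul_nonneg h0z h0z) (by nlinarith : (0:ℝ) ≤ 1 - nz * nz)]

lemma arA3 (nb nz : ℝ) (hb : nb ≤ nz) (hz : nz ≤ 1) (h0b : 0 ≤ nb) :
    1 - nz ^ 2 ≤ 2 * (1 - nb ^ 2) := by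
  nlinarith [sq_nonneg (1 - nz), mul_nonneg h0b (by linarith : (0:ℝ) ≤ 1 - nb)]

lemma arA4 (x D : ℝ) (h1 : 1 - x ≤ D) (hx : x ≤ 1) (h0 : 0 ≤ x) :
    1 - x ^ 2 ≤ 2 * D := by
  nlinarith [mul_le_mul_of_nonneg_right h1 (by linarith : (0:ℝ) ≤ 1 + x),
    mul_nonneg (by linarith : (0:ℝ) ≤ D) (by linarith : (0:ℝ) ≤ 1 - x)]

lemma arA5 (α δ p q E NZ : ℝ) (hα : 1 ≤ α) (h0 : δ ≤ α / 2 * E + p * q)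
    (hp : p ^ 2 ≤ NZ) (hq : q ^ 2 ≤ α * E) (hE : E ≤ 2 * NZ) (hNZ : 0 ≤ NZ) :
    δ ≤ (1 + 2 * α) * NZ := by
  nlinarith [sq_nonneg (p - q), mul_nonneg (by linarith : (0:ℝ) ≤ α)
    (by linarith : (0:ℝ) ≤ 2 * NZ - E)]

lemma arA6 (α na nb δ p q E : ℝ) (hα : 1 ≤ α) (h6 : na ≤ nb + δ) (hna1 : na ≤ 1)
    (h0a : 0 ≤ na) (h0b : 0 ≤ nb) (hδ0 : δ ≤ α / 2 * E + p * q)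
    (hp : p ^ 2 ≤ 1 - nb ^ 2) (hq : q ^ 2 ≤ α * E) (hE : E ≤ 1 - na ^ 2)
    (hE0 : 0 ≤ E) : 1 - nb ^ 2 ≤ (3 + 7 * α) * (1 - na ^ 2) := by
  nlinarith [sq_nonneg (1 - nb), mul_nonneg h0a (by linarith : (0:ℝ) ≤ 1 - na),
    sq_nonneg (p - 4 * q),
    mul_nonneg (by linarith : (0:ℝ) ≤ α) (by linarith : (0:ℝ) ≤ (1 - na ^ 2) - E),
    mul_nonneg (by linarith : (0:ℝ) ≤ α) (by nlinarith : (0:ℝ) ≤ 1 - na ^ 2)]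

lemma arA7 (α na nb δ : ℝ) (hα : 0 ≤ α) (h6' : nb ≤ na + δ)
    (hδ1 : δ ≤ (1 + 2 * α) * (1 - nb ^ 2)) (hna1 : na ≤ 1) (h0a : 0 ≤ na)
    (h0b : 0 ≤ nb) (hnb1 : nb ≤ 1) : 1 - na ^ 2 ≤ (4 + 4 * α) * (1 - nb ^ 2) := by
  nlinarith [sq_nonneg (1 - na), mul_nonneg h0b (by linarith : (0:ℝ) ≤ 1 - nb)]

lemma arA8 (α NZ Dz DZ δ : ℝ) (hα : 0 ≤ α) (h4 : Dz ≤ DZ + δ)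
    (hδ1 : δ ≤ (1 + 2 * α) * NZ) (hNZDZ : NZ ≤ 2 * DZ) :
    Dz ≤ (3 + 4 * α) * DZ := by
  nlinarith [mul_nonneg hα (by linarith : (0:ℝ) ≤ 2 * DZ - NZ)]

lemma arA9 (α Nz NZ Dz DZ δ p q E : ℝ) (hα : 1 ≤ α) (h5 : DZ ≤ Dz + δ)
    (hδ0 : δ ≤ α / 2 * E + p * q) (hp : p ^ 2 ≤ NZ) (hii : NZ ≤ (3 + 7 * α) * Nz)
    (hq : q ^ 2 ≤ α * E) (hE : E ≤ Nz) (hNzDz : Nz ≤ 2 * Dz) (h0Nz : 0 ≤ Nz) :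
    DZ ≤ (4 + 9 * α) * Dz := by
  nlinarith [sq_nonneg (p - q),
    mul_nonneg (by linarith : (0:ℝ) ≤ α) (by linarith : (0:ℝ) ≤ Nz - E),
    mul_nonneg (by linarith : (0:ℝ) ≤ α) (by linarith : (0:ℝ) ≤ 2 * Dz - Nz)]

lemma arA10 (α Nz NZ Dz DZ : ℝ) (hα : 1 ≤ α) (h0NZ : 0 ≤ NZ) (h0DZ : 0 ≤ DZ)
    (hi : Nz ≤ (4 + 4 * α) * NZ) (hiv : DZ ≤ (4 + 9 * α) * Dz) :
    Nz * DZ ^ 2 ≤ ((4 + 4 * α) * (4 + 9 * α) ^ 2 + (3 + 7 * α) * (3 + 4 * α) ^ 2)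
      * NZ * Dz ^ 2 := by
  have h1 : DZ ^ 2 ≤ ((4 + 9 * α) * Dz) ^ 2 := pow_le_pow_left₀ h0DZ hiv 2
  have h2 := mul_le_mul hi h1 (sq_nonneg DZ)
    (by nlinarith : (0:ℝ) ≤ (4 + 4 * α) * NZ)
  have h3 : (0:ℝ) ≤ (3 + 7 * α) * (3 + 4 * α) ^ 2 * (NZ * Dz ^ 2) :=
    mul_nonneg (by positivity) (mul_nonneg h0NZ (sq_nonneg Dz))
  nlinarith [h2, h3]

end arith

set_option maxHeartbeats 1000000 in
/-- For `α > 1`, `ζ` on the unit sphere of `ℂ^d`, `w ∈ 𝔹_d` and `z ∈ D_α(ζ)` with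
`‖z‖ ≥ ‖w‖`, the pluriharmonic Drury–Arveson kernel values `k(z,w)` and `k(ζ,w)` are
comparable with constants depending only on `α`. -/
theorem stmt4 (α : ℝ) (hα : 1 < α) :
    ∃ C : ℝ, 0 < C ∧
      ∀ (d : ℕ) (ζ w z : EuclideanSpace ℂ (Fin d)),
        ‖ζ‖ = 1 → ‖w‖ < 1 → ‖z‖ < 1 →
        ‖(1 : ℂ) - ⟪ζ, z⟫‖ < α / 2 * (1 - ‖z‖ ^ 2) →
        ‖w‖ ≤ ‖z‖ →
        phDAkernel d z w ≤ C * phDAkernel d ζ w ∧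
        phDAkernel d ζ w ≤ C * phDAkernel d z w := by
  refine ⟨(4 + 4*α) * (4 + 9*α)^2 + (3 + 7*α) * (3 + 4*α)^2, by positivity, ?_⟩
  intro d ζ w z hζ hw hz hDα hwz
  set a : ℂ := ⟪w, z⟫ with ha
  set b : ℂ := ⟪w, ζ⟫ with hb
  set e : ℂ := ⟪ζ, z⟫ with he
  set c : ℂ := ⟪ζ, w⟫ with hc
  have hζζ : ⟪ζ, ζ⟫ = (1 : ℂ) := by
    rw [inner_self_eq_norm_sq_to_K, hζ]; norm_num
  have hcbar : starRingEnd ℂ c = b := inner_conj_symm w ζ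
  have hkey : b - a = b * (1 - e) - ⟪w - c • ζ, z - e • ζ⟫ := by
    simp only [inner_sub_left, inner_sub_right, inner_smul_left, inner_smul_right, hζζ,
      ← ha, ← hb, ← he, hcbar]
    ring
  set na := ‖a‖ with hna'
  set nb := ‖b‖ with hnb'
  set ne := ‖e‖ with hne'
  set nw := ‖w‖ with hnw'
  set nz := ‖z‖ with hnz'
  set de := ‖(1:ℂ) - e‖ with hde'
  set Dz := ‖(1:ℂ) - a‖ with hDz'
  set DZ := ‖(1:ℂ) - b‖ with hDZ'
  set δ := ‖b - a‖ with hδ'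
  set p := ‖w - c • ζ‖ with hp'
  set q := ‖z - e • ζ‖ with hq'
  have pnn : 0 ≤ p := norm_nonneg _
  have qnn : 0 ≤ q := norm_nonneg _
  have nann : 0 ≤ na := norm_nonneg _
  have nbnn : 0 ≤ nb := norm_nonneg _
  have nenn : 0 ≤ ne := norm_nonneg _
  have nwnn : 0 ≤ nw := norm_nonneg _
  have nznn : 0 ≤ nz := norm_nonneg _
  have denn : 0 ≤ de := norm_nonneg _
  have δnn : 0 ≤ δ := norm_nonneg _
  have hna : na ≤ nw * nz := norm_inner_le_norm w z
  have hnb : nb ≤ nw := by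
    have h := norm_inner_le_norm (𝕜 := ℂ) w ζ
    rw [hζ, mul_one] at h; exact h
  have hne : ne ≤ nz := by
    have h := norm_inner_le_norm (𝕜 := ℂ) ζ z
    rw [hζ, one_mul] at h; exact h
  have hp2 : p ^ 2 = nw ^ 2 - nb ^ 2 := by
    rw [hp', pythag ζ w hζ, ← hc, ← hnw']
    have hcn : ‖c‖ = nb := by rw [hnb', ← hcbar, RCLike.norm_conj]
    rw [hcn]
  have hq2 : q ^ 2 = nz ^ 2 - ne ^ 2 := by
    rw [hq', pythag ζ z hζ]
  have h1 : 1 - na ≤ Dz := by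
    have h := norm_sub_norm_le (1 : ℂ) a
    rwa [norm_one] at h
  have h2 : 1 - nb ≤ DZ := by
    have h := norm_sub_norm_le (1 : ℂ) b
    rwa [norm_one] at h
  have h3 : 1 - ne ≤ de := by
    have h := norm_sub_norm_le (1 : ℂ) e
    rwa [norm_one] at h
  have h4 : Dz ≤ DZ + δ := by
    calc Dz = ‖((1:ℂ) - b) + (b - a)‖ := by rw [hDz']; ring_nf
    _ ≤ DZ + δ := norm_add_le _ _
  have h5 : DZ ≤ Dz + δ := by
    calc DZ = ‖((1:ℂ) - a) - (b - a)‖ := by rw [hDZ']; ring_nf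
    _ ≤ Dz + δ := norm_sub_le _ _
  have h6 : nb ≤ na + δ := by
    have h := norm_sub_norm_le b a
    linarith
  have h6' : na ≤ nb + δ := by
    have h := norm_sub_le b (b - a)
    have h2 : b - (b - a) = a := by ring
    rw [h2] at h; linarith
  have h11 : δ ≤ nb * de + p * q := by
    rw [hδ', hkey]
    refine (norm_sub_le _ _).trans ?_
    have e1 : ‖b * (1 - e)‖ = nb * de := norm_mul _ _
    have e2 : ‖⟪w - c • ζ, z - e • ζ⟫‖ ≤ p * q := norm_inner_le_norm _ _
    linarith
  have hde : de < α / 2 * (1 - nz ^ 2) := hDα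
  have hk1 : phDAkernel d z w = (1 - na ^ 2) / Dz ^ 2 := by
    rw [phDAkernel, hna', hDz', ha]
  have hk2 : phDAkernel d ζ w = (1 - nb ^ 2) / DZ ^ 2 := by
    rw [phDAkernel, hnb', hDZ', hb]
  rw [hk1, hk2]
  clear_value na nb ne nw nz de Dz DZ δ p q
  clear hk1 hk2 hkey hcbar hζζ ha hb he hc hna' hnb' hne' hnw' hnz' hde' hDz' hDZ' hδ' hp' hq' hζ hDα
  clear a b e c ζ w z
  -- derived bounds
  have hαpos : (0:ℝ) < α := by linarith
  have hnalt : na < 1 := lt_of_le_of_lt hna (by nlinarith)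
  have hnblt : nb < 1 := lt_of_le_of_lt hnb hw
  have hq2' : q ^ 2 ≤ α * (1 - nz ^ 2) := arA1 α ne nz de q hq2 hne nenn hz h3 hde.le
  have hp2' : p ^ 2 ≤ 1 - nb ^ 2 := by nlinarith [hp2, hw]
  have hENz : 1 - nz ^ 2 ≤ 1 - na ^ 2 := arA2 na nw nz hna hwz nwnn nznn hz.le nann
  have hENZ : 1 - nz ^ 2 ≤ 2 * (1 - nb ^ 2) := arA3 nb nz (hnb.trans hwz) hz.le nbnn
  have Nzpos : 0 < 1 - na ^ 2 := by nlinarith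
  have NZpos : 0 < 1 - nb ^ 2 := by nlinarith
  have Dzpos : 0 < Dz := by linarith
  have DZpos : 0 < DZ := by linarith
  have hNzDz : 1 - na ^ 2 ≤ 2 * Dz := arA4 na Dz h1 hnalt.le nann
  have hNZDZ : 1 - nb ^ 2 ≤ 2 * DZ := arA4 nb DZ h2 hnblt.le nbnn
  have hδ0 : δ ≤ α / 2 * (1 - nz ^ 2) + p * q := by
    nlinarith [h11, mul_nonneg (by linarith : (0:ℝ) ≤ 1 - nb) denn, hde]
  have hδ1 : δ ≤ (1 + 2*α) * (1 - nb ^ 2) :=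
    arA5 α δ p q (1 - nz ^ 2) (1 - nb ^ 2) hα.le hδ0 hp2' hq2' hENZ NZpos.le
  have hii : 1 - nb ^ 2 ≤ (3 + 7*α) * (1 - na ^ 2) :=
    arA6 α na nb δ p q (1 - nz ^ 2) hα.le h6' hnalt.le nann nbnn hδ0 hp2' hq2' hENz
      (by nlinarith)
  have hi : 1 - na ^ 2 ≤ (4 + 4*α) * (1 - nb ^ 2) :=
    arA7 α na nb δ hαpos.le h6 hδ1 hnalt.le nann nbnn hnblt.le
  have hiii : Dz ≤ (3 + 4*α) * DZ := arA8 α (1 - nb ^ 2) Dz DZ δ hαpos.le h4 hδ1 hNZDZ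
  have hiv : DZ ≤ (4 + 9*α) * Dz :=
    arA9 α (1 - na ^ 2) (1 - nb ^ 2) Dz DZ δ p q (1 - nz ^ 2) hα.le h5 hδ0 hp2' hii
      hq2' hENz hNzDz Nzpos.le
  have key : ∀ X Y DX DY KN KD : ℝ, 0 < Y → 0 < DX → 0 < DY → X ≤ KN * Y →
      DY ≤ KD * DX → 0 ≤ KN → KN * KD ^ 2 ≤ (4 + 4*α) * (4 + 9*α)^2 + (3 + 7*α) * (3 + 4*α)^2 →
      X / DX ^ 2 ≤ ((4 + 4*α) * (4 + 9*α)^2 + (3 + 7*α) * (3 + 4*α)^2) * (Y / DY ^ 2) := by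
    intro X Y DX DY KN KD hY hDX hDY hXY hD hKN hC
    rw [← mul_div_assoc, div_le_div_iff₀ (by positivity) (by positivity)]
    have e1 : DY ^ 2 ≤ (KD * DX) ^ 2 := pow_le_pow_left₀ hDY.le hD 2
    have e2 : X * DY ^ 2 ≤ (KN * Y) * ((KD * DX) ^ 2) :=
      mul_le_mul hXY e1 (sq_nonneg DY) (by positivity)
    have e3 : (KN * Y) * ((KD * DX) ^ 2) = (KN * KD ^ 2) * (Y * DX ^ 2) := by ring
    have e4 : (KN * KD ^ 2) * (Y * DX ^ 2) ≤
        ((4 + 4*α) * (4 + 9*α)^2 + (3 + 7*α) * (3 + 4*α)^2) * (Y * DX ^ 2) :=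
      mul_le_mul_of_nonneg_right hC (by positivity)
    calc X * DY ^ 2 ≤ (KN * Y) * ((KD * DX) ^ 2) := e2
    _ = (KN * KD ^ 2) * (Y * DX ^ 2) := e3
    _ ≤ ((4 + 4*α) * (4 + 9*α)^2 + (3 + 7*α) * (3 + 4*α)^2) * (Y * DX ^ 2) := e4
    _ = ((4 + 4*α) * (4 + 9*α)^2 + (3 + 7*α) * (3 + 4*α)^2) * Y * DX ^ 2 := by ring
  constructor
  · exact key (1 - na ^ 2) (1 - nb ^ 2) Dz DZ (4 + 4*α) (4 + 9*α) NZpos Dzpos DZpos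
      hi hiv (by positivity) (by nlinarith [sq_nonneg (3 + 4*α), hαpos])
  · exact key (1 - nb ^ 2) (1 - na ^ 2) DZ Dz (3 + 7*α) (3 + 4*α) Nzpos DZpos Dzpos
      hii hiii (by positivity) (by nlinarith [sq_nonneg (4 + 9*α), hαpos])
end

section
/- Let E ⊂ ∂𝔻 be a compact subset of the unit circle with normalized Lebesgue measure m(E) > 0, and let μ be the probability measure with density χ_E/m(E) with respect to m. Then sup_{0≤r<1} Σ_{n∈ℤ} r^{2|n|}|μ̂(n)|² = 1/m(E), and for every probability measure ν supported on E one has sup_{0≤r<1} Σ_{n∈ℤ} r^{2|n|}|ν̂(n)|² ≥ 1/m(E). Consequently the harmonic-Hardy-space capacity of E equals m(E). -/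
open MeasureTheory Complex
open scoped ENNReal

noncomputable instance : MeasurableSpace Circle := borel Circle
instance : BorelSpace Circle := ⟨rfl⟩

/-- The `n`-th Fourier coefficient `μ̂(n) = ∫ z̄^n dμ(z)` of a measure on the unit circle. -/
noncomputable def muHat (μ : Measure Circle) (n : ℤ) : ℂ :=
  ∫ z : Circle, (starRingEnd ℂ (z : ℂ)) ^ n ∂μ

/-- The energy of a measure on the circle for the harmonic Hardy space `h²(𝔻)`:
`ℰ(μ) = sup_{0≤r<1} Σ_{n∈ℤ} r^{2|n|} |μ̂(n)|²`. -/
noncomputable def energyH2 (μ : Measure Circle) : ℝ≥0∞ :=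
  ⨆ r : {r : ℝ // 0 ≤ r ∧ r < 1},
    ENNReal.ofReal (∑' n : ℤ, (r : ℝ) ^ (2 * n.natAbs) * ‖muHat μ n‖ ^ 2)

/-! The normalised restriction `μ = m(E)⁻¹ • m|_E` has `μ̂(n) = m(E)⁻¹ ⟪χ_E, zⁿ⟫_{L²(m)}`, so
Bessel's inequality bounds its energy by `‖χ_E‖² / m(E)² = 1 / m(E)`.

Conversely, let `ν` be a probability measure on `E`. For a trigonometric polynomial
`q = ∑ cₙ zⁿ` one has `∫ q dν = ∑ cₙ conj (ν̂(n)) = ⟪∑ ν̂(n) zⁿ, q⟫_{L²(m)}`, so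
Cauchy–Schwarz gives `|∫ q dν|² ≤ ‖q‖²_{L²(m)} ℰ(ν)`, and by density of trigonometric
polynomials this holds for every continuous `q`. A Urysohn function equal to `1` on `E` and
vanishing off an open `U ⊇ E` then yields `1 ≤ m(U) ℰ(ν)`, and outer regularity of `m` lets
`U` shrink to `E`. -/

lemma sq_norm_indicatorConstLp_one {α : Type*} [MeasurableSpace α] {μ : Measure α} {s : Set α}
    (hs : MeasurableSet s) (hμs : μ s ≠ ∞) :
    ‖indicatorConstLp 2 hs hμs (1 : ℂ)‖ ^ 2 = μ.real s := by
  rw [norm_indicatorConstLp two_ne_zero ENNReal.ofNat_ne_top, norm_one, one_mul,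
    ENNReal.toReal_ofNat, ← Real.sqrt_eq_rpow, Real.sq_sqrt measureReal_nonneg]

lemma continuous_integral_continuousMap {X : Type*} [TopologicalSpace X] [CompactSpace X]
    [MeasurableSpace X] [BorelSpace X] (ν : Measure X) [IsFiniteMeasure ν] :
    Continuous fun f : C(X, ℂ) => ∫ x, f x ∂ν :=
  (continuous_integral.comp (ContinuousMap.toLp (E := ℂ) 1 ν ℂ).continuous).congr fun f =>
    integral_congr_ae (ContinuousMap.coeFn_toLp ν f)

namespace Circle

open Set Submodule Filter Topology Real
open scoped InnerProductSpace

noncomputable def fourier (n : ℤ) : C(Circle, ℂ) :=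
  ⟨fun z => ((z ^ n : Circle) : ℂ), continuous_subtype_val.comp (continuous_zpow n)⟩

@[simp] lemma fourier_apply (n : ℤ) (z : Circle) : fourier n z = (z : ℂ) ^ n := rfl

lemma dense_span_fourier : Dense (span ℂ (range fourier) : Set C(Circle, ℂ)) := by
  have : Fact (0 < 2 * π) := ⟨two_pi_pos⟩
  set e := AddCircle.homeomorphCircle two_pi_pos.ne' with he
  let L := ((e.symm : C(Circle, AddCircle (2 * π))).compStarAlgHom' ℂ ℂ).toLinearMap
  have hL : L '' range _root_.fourier = range fourier := by
    rw [← range_comp]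
    congr 1
    ext n z
    change _root_.fourier n (e.symm z) = (z : ℂ) ^ n
    conv_rhs => rw [← e.apply_symm_apply z]
    rw [he, AddCircle.homeomorphCircle_apply, _root_.fourier_apply, AddCircle.toCircle_zsmul]
    rfl
  have hsurj : Function.Surjective L := fun g => ⟨g.comp (e : C(AddCircle (2 * π), Circle)), by
    ext z; simp [L]⟩
  rw [← hL, ← Submodule.map_span, Submodule.map_coe]
  exact hsurj.denseRange.dense_image (ContinuousMap.continuous_precomp _)
    (dense_iff_topologicalClosure_eq_top.mpr span_fourier_closure_eq_top)

lemma integral_fourier_eq_zero (μ : Measure Circle) [μ.IsMulLeftInvariant] {n : ℤ} (hn : n ≠ 0) :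
    ∫ z, fourier n z ∂μ = 0 := by
  have hpow : ((exp (π / n) : Circle) : ℂ) ^ n = -1 := by
    rw [← coe_zpow, ← exp_intCast_mul, mul_div_cancel₀ _ (Int.cast_ne_zero.mpr hn), coe_exp,
      Complex.exp_pi_mul_I]
  exact integral_eq_zero_of_mul_left_eq_neg (g := exp (π / n)) fun z => by
    rw [fourier_apply, fourier_apply, coe_mul, mul_zpow, hpow, neg_one_mul]

noncomputable abbrev fourierLp (μ : Measure Circle) [IsFiniteMeasure μ] (n : ℤ) : Lp ℂ 2 μ :=
  ContinuousMap.toLp 2 μ ℂ (fourier n)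

lemma orthonormal_fourierLp (μ : Measure Circle) [μ.IsMulLeftInvariant] [IsProbabilityMeasure μ] :
    Orthonormal ℂ (fourierLp μ) := by
  rw [orthonormal_iff_ite]
  intro i j
  have hprod : ∀ z : Circle, starRingEnd ℂ (fourier i z) * fourier j z = fourier (j - i) z := by
    intro z
    simp [zpow_sub₀ (coe_ne_zero z), ← coe_inv_eq_conj, div_eq_inv_mul]
  rw [ContinuousMap.inner_toLp]
  simp_rw [mul_comm (fourier j _), hprod]
  split_ifs with h
  · simp [h]
  · exact integral_fourier_eq_zero μ (sub_ne_zero.mpr (Ne.symm h))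

lemma muHat_eq_integral_fourier (μ : Measure Circle) (n : ℤ) :
    muHat μ n = ∫ z, fourier (-n) z ∂μ := by
  simp [muHat, ← coe_inv_eq_conj]

lemma integral_fourier_eq_conj_muHat (μ : Measure Circle) (n : ℤ) :
    ∫ z, fourier n z ∂μ = starRingEnd ℂ (muHat μ n) := by
  rw [muHat, ← integral_conj]
  simp [← coe_inv_eq_conj]

lemma norm_muHat_le_one (μ : Measure Circle) [IsProbabilityMeasure μ] (n : ℤ) :
    ‖muHat μ n‖ ≤ 1 := by
  simpa [muHat] using norm_integral_le_of_norm_le_const (μ := μ) (C := 1)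
    (Eventually.of_forall fun z : Circle => by simp [norm_zpow, Circle.norm_coe])

lemma summable_pow_natAbs {r : ℝ} (h0 : 0 ≤ r) (h1 : r < 1) :
    Summable fun n : ℤ => r ^ n.natAbs :=
  .of_nat_of_neg (by simpa using summable_geometric_of_lt_one h0 h1)
    (by simpa using summable_geometric_of_lt_one h0 h1)

lemma summable_pow_natAbs_mul_sq_norm_muHat (μ : Measure Circle) [IsProbabilityMeasure μ]
    {r : ℝ} (h0 : 0 ≤ r) (h1 : r < 1) :
    Summable fun n : ℤ => r ^ (2 * n.natAbs) * ‖muHat μ n‖ ^ 2 := by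
  refine (summable_pow_natAbs (sq_nonneg r) (by nlinarith)).of_nonneg_of_le
    (fun n => by positivity) fun n => ?_
  rw [pow_mul]
  exact mul_le_of_le_one_right (by positivity)
    (pow_le_one₀ (norm_nonneg _) (norm_muHat_le_one μ n))

lemma ofReal_sum_le_energyH2 (μ : Measure Circle) [IsProbabilityMeasure μ] (s : Finset ℤ) :
    ENNReal.ofReal (∑ n ∈ s, ‖muHat μ n‖ ^ 2) ≤ energyH2 μ := by
  set S := ∑ n ∈ s, ‖muHat μ n‖ ^ 2
  set M := s.sup Int.natAbs
  have hweighted : ∀ r ∈ Ioo (0 : ℝ) 1, ENNReal.ofReal (r ^ (2 * M) * S) ≤ energyH2 μ := by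
    rintro r ⟨h0, h1⟩
    refine le_trans (ENNReal.ofReal_le_ofReal ?_) (le_iSup_of_le ⟨r, h0.le, h1⟩ le_rfl)
    rw [Finset.mul_sum]
    refine (Finset.sum_le_sum fun n hn => ?_).trans
      ((summable_pow_natAbs_mul_sq_norm_muHat μ h0.le h1).sum_le_tsum s fun n _ => by positivity)
    have hn : n.natAbs ≤ M := Finset.le_sup (f := Int.natAbs) hn
    exact mul_le_mul_of_nonneg_right (pow_le_pow_of_le_one h0.le h1.le (by omega))
      (by positivity)
  have hlim : Tendsto (fun r : ℝ => ENNReal.ofReal (r ^ (2 * M) * S)) (𝓝[<] 1)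
      (𝓝 (ENNReal.ofReal S)) := by
    have hcont : Continuous fun r : ℝ => ENNReal.ofReal (r ^ (2 * M) * S) :=
      ENNReal.continuous_ofReal.comp (by fun_prop)
    simpa using (hcont.tendsto 1).mono_left nhdsWithin_le_nhds
  exact le_of_tendsto hlim (eventually_of_mem (Ioo_mem_nhdsLT zero_lt_one) hweighted)

lemma energyH2_le_ofReal (μ : Measure Circle) {C : ℝ}
    (h : ∀ s : Finset ℤ, ∑ n ∈ s, ‖muHat μ n‖ ^ 2 ≤ C) : energyH2 μ ≤ ENNReal.ofReal C :=
  iSup_le fun r => ENNReal.ofReal_le_ofReal <| tsum_le_of_sum_le' (by simpa using h ∅) fun s =>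
    (Finset.sum_le_sum fun n _ => mul_le_of_le_one_left (by positivity)
      (pow_le_one₀ r.2.1 r.2.2.le)).trans (h s)

lemma sum_sq_norm_muHat_smul_restrict_le (m : Measure Circle) [m.IsMulLeftInvariant]
    [IsProbabilityMeasure m] {E : Set Circle} (hE : MeasurableSet E) (s : Finset ℤ) :
    ∑ n ∈ s, ‖muHat ((m E)⁻¹ • m.restrict E) n‖ ^ 2 ≤ (m.real E)⁻¹ := by
  set χ : Lp ℂ 2 m := indicatorConstLp 2 hE (measure_ne_top m E) 1
  have hχ : ‖χ‖ ^ 2 = m.real E := sq_norm_indicatorConstLp_one hE (measure_ne_top m E)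
  have hcoeff : ∀ n, muHat ((m E)⁻¹ • m.restrict E) n
      = (m.real E)⁻¹ * ⟪χ, fourierLp m (-n)⟫_ℂ := by
    intro n
    rw [muHat_eq_integral_fourier, integral_smul_measure, L2.inner_indicatorConstLp_one,
      setIntegral_congr_ae hE ((ContinuousMap.coeFn_toLp m (fourier (-n))).mono fun _ h _ => h),
      ENNReal.toReal_inv, Complex.real_smul, measureReal_def]
  have hbessel := ((orthonormal_fourierLp m).comp _ neg_injective).sum_inner_products_le χ (s := s)
  calc ∑ n ∈ s, ‖muHat ((m E)⁻¹ • m.restrict E) n‖ ^ 2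
      = (m.real E)⁻¹ ^ 2 * ∑ n ∈ s, ‖⟪fourierLp m (-n), χ⟫_ℂ‖ ^ 2 := by
        rw [Finset.mul_sum]
        refine Finset.sum_congr rfl fun n _ => ?_
        rw [hcoeff, norm_mul, norm_inner_symm, mul_pow, Complex.norm_real, norm_inv,
          Real.norm_of_nonneg measureReal_nonneg]
    _ ≤ (m.real E)⁻¹ ^ 2 * m.real E := by
        rw [← hχ]; exact mul_le_mul_of_nonneg_left hbessel (by positivity)
    _ ≤ (m.real E)⁻¹ := by
        rcases (measureReal_nonneg (μ := m) (s := E)).eq_or_lt with h | h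
        · simp [← h]
        · rw [sq, mul_assoc, inv_mul_cancel₀ h.ne', mul_one]

lemma sq_norm_integral_le_of_sum_le (m : Measure Circle) [m.IsMulLeftInvariant]
    [IsProbabilityMeasure m] (ν : Measure Circle) [IsFiniteMeasure ν] {B : ℝ}
    (hB : ∀ s : Finset ℤ, ∑ n ∈ s, ‖muHat ν n‖ ^ 2 ≤ B) (f : C(Circle, ℂ)) :
    ‖∫ z, f z ∂ν‖ ^ 2 ≤ ‖ContinuousMap.toLp (E := ℂ) 2 m ℂ f‖ ^ 2 * B := by
  have hclosed : IsClosed {f : C(Circle, ℂ) |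
      ‖∫ z, f z ∂ν‖ ^ 2 ≤ ‖ContinuousMap.toLp (E := ℂ) 2 m ℂ f‖ ^ 2 * B} :=
    isClosed_le ((continuous_integral_continuousMap ν).norm.pow 2)
      (((ContinuousMap.toLp 2 m ℂ).continuous.norm.pow 2).mul continuous_const)
  refine hclosed.closure_subset_iff.mpr (fun q hq => ?_)
    (dense_span_fourier.closure_eq ▸ mem_univ f)
  obtain ⟨c, rfl⟩ := Finsupp.mem_span_range_iff_exists_finsupp.mp hq
  set g : Lp ℂ 2 m := ∑ n ∈ c.support, muHat ν n • fourierLp m n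
  have hint : ∫ z, (c.sum fun n a => a • fourier n) z ∂ν
      = ⟪g, ContinuousMap.toLp (E := ℂ) 2 m ℂ (c.sum fun n a => a • fourier n)⟫_ℂ := by
    rw [Finsupp.sum, map_sum]
    simp_rw [map_smul]
    rw [(orthonormal_fourierLp m).inner_sum]
    simp only [ContinuousMap.coe_sum, Finset.sum_apply, ContinuousMap.coe_smul, Pi.smul_apply,
      smul_eq_mul]
    rw [integral_finsetSum _ fun n _ => ((fourier n).continuous.integrable_of_hasCompactSupport
        (.of_compactSpace _)).const_mul _]
    refine Finset.sum_congr rfl fun n _ => ?_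
    rw [integral_const_mul, integral_fourier_eq_conj_muHat, mul_comm]
  have hg : ‖g‖ ^ 2 ≤ B := by
    have hsq : ‖g‖ ^ 2 = ∑ n ∈ c.support, ‖muHat ν n‖ ^ 2 := by
      rw [@norm_sq_eq_re_inner ℂ, (orthonormal_fourierLp m).inner_sum, map_sum]
      simp [RCLike.conj_mul, ← Complex.ofReal_pow]
    exact hsq ▸ hB c.support
  calc ‖∫ z, (c.sum fun n a => a • fourier n) z ∂ν‖ ^ 2
      ≤ (‖g‖ * ‖ContinuousMap.toLp (E := ℂ) 2 m ℂ (c.sum fun n a => a • fourier n)‖) ^ 2 := by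
        rw [hint]; gcongr; exact norm_inner_le_norm _ _
    _ ≤ _ := by rw [mul_pow, mul_comm]; gcongr

lemma inv_measure_le_energyH2_of_isOpen (m : Measure Circle) [m.IsMulLeftInvariant]
    [IsProbabilityMeasure m] {E U : Set Circle} (hE : IsClosed E) (hU : IsOpen U) (hEU : E ⊆ U)
    (ν : Measure Circle) [IsProbabilityMeasure ν] (hν : ν Eᶜ = 0) :
    (m U)⁻¹ ≤ energyH2 ν := by
  rcases eq_top_or_lt_top (energyH2 ν) with htop | hfin
  · simp [htop]
  have hB : ∀ s : Finset ℤ, ∑ n ∈ s, ‖muHat ν n‖ ^ 2 ≤ (energyH2 ν).toReal := fun s =>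
    (ENNReal.ofReal_le_iff_le_toReal hfin.ne).mp (ofReal_sum_le_energyH2 ν s)
  obtain ⟨φ, hφU, hφE, hφ01⟩ := exists_continuous_zero_one_of_isClosed hU.isClosed_compl hE
    (disjoint_compl_left_iff.mpr hEU)
  let φℂ : C(Circle, ℂ) := ⟨fun z => φ z, by fun_prop⟩
  have hone : ∫ z, φℂ z ∂ν = 1 := by
    have hae : ∀ᵐ z ∂ν, φℂ z = 1 := by
      filter_upwards [measure_eq_zero_iff_ae_notMem.mp hν] with z hz
      simp [φℂ, hφE (not_not.mp hz)]
    simp [integral_congr_ae hae]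
  have hL2 : ‖ContinuousMap.toLp (E := ℂ) 2 m ℂ φℂ‖ ^ 2 ≤ m.real U := by
    rw [← sq_norm_indicatorConstLp_one hU.measurableSet (measure_ne_top m U)]
    refine pow_le_pow_left₀ (norm_nonneg _) (Lp.norm_le_norm_of_ae_le ?_) 2
    filter_upwards [ContinuousMap.coeFn_toLp (p := 2) (𝕜 := ℂ) m φℂ,
      indicatorConstLp_coeFn (hs := hU.measurableSet) (hμs := measure_ne_top m U) (c := (1 : ℂ))]
      with z hφz hUz
    rw [hφz, hUz]
    by_cases hz : z ∈ U
    · simpa [φℂ, hz, abs_of_nonneg (hφ01 z).1] using (hφ01 z).2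
    · simp [φℂ, hz, hφU hz]
  have hreal : 1 ≤ m.real U * (energyH2 ν).toReal := by
    simpa [hone] using (sq_norm_integral_le_of_sum_le m ν hB φℂ).trans
      (mul_le_mul_of_nonneg_right hL2 ENNReal.toReal_nonneg)
  rw [ENNReal.inv_le_iff_le_mul (fun h => absurd h hfin.ne)
    (fun h => absurd h (measure_ne_top m U))]
  calc 1 = ENNReal.ofReal 1 := ENNReal.ofReal_one.symm
    _ ≤ ENNReal.ofReal (m.real U * (energyH2 ν).toReal) := ENNReal.ofReal_le_ofReal hreal
    _ = m U * energyH2 ν := by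
      rw [ENNReal.ofReal_mul measureReal_nonneg, ofReal_measureReal (measure_ne_top m U),
        ENNReal.ofReal_toReal hfin.ne]

lemma inv_measure_le_energyH2 (m : Measure Circle) [m.IsMulLeftInvariant]
    [IsProbabilityMeasure m] {E : Set Circle} (hE : IsClosed E)
    (ν : Measure Circle) [IsProbabilityMeasure ν] (hν : ν Eᶜ = 0) :
    (m E)⁻¹ ≤ energyH2 ν := by
  rw [ENNReal.inv_le_iff_inv_le]
  refine le_of_forall_gt_imp_ge_of_dense fun c hc => ?_
  obtain ⟨U, hEU, hU, hUc⟩ := E.exists_isOpen_lt_of_lt c hc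
  exact (ENNReal.inv_le_iff_inv_le.mp (inv_measure_le_energyH2_of_isOpen m hE hU hEU ν hν)).trans
    hUc.le

lemma energyH2_smul_restrict_le (m : Measure Circle) [m.IsMulLeftInvariant]
    [IsProbabilityMeasure m] {E : Set Circle} (hE : MeasurableSet E) :
    energyH2 ((m E)⁻¹ • m.restrict E) ≤ (m E)⁻¹ := by
  rcases eq_or_ne (m E) 0 with h | h
  · simp [h]
  calc energyH2 ((m E)⁻¹ • m.restrict E)
      ≤ ENNReal.ofReal (m.real E)⁻¹ :=
        energyH2_le_ofReal _ (sum_sq_norm_muHat_smul_restrict_le m hE)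
    _ = (m E)⁻¹ := by
      rw [measureReal_def, ENNReal.ofReal_inv_of_pos (ENNReal.toReal_pos h (measure_ne_top m E)),
        ENNReal.ofReal_toReal (measure_ne_top m E)]

end Circle

/-- For a compact `E ⊆ ∂𝔻` with `m(E) > 0` (`m` normalized Haar measure), the measure
`μ = χ_E/m(E) dm` has energy exactly `1/m(E)`; every probability measure supported on `E`
has energy at least `1/m(E)`; consequently the `h²(𝔻)`-capacity of `E` equals `m(E)`. -/
theorem stmt6 (m : Measure Circle) [m.IsHaarMeasure] [IsProbabilityMeasure m]
    (E : Set Circle) (hE : IsCompact E) (hmE : 0 < m E) :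
    energyH2 ((m E)⁻¹ • m.restrict E) = (m E)⁻¹ ∧
    (∀ ν : Measure Circle, IsProbabilityMeasure ν → ν Eᶜ = 0 → (m E)⁻¹ ≤ energyH2 ν) ∧
    (⨆ ν : {ν : Measure Circle // IsProbabilityMeasure ν ∧ ν Eᶜ = 0},
        (energyH2 (ν : Measure Circle))⁻¹) = m E := by
  have hlower : ∀ ν : Measure Circle, IsProbabilityMeasure ν → ν Eᶜ = 0 →
      (m E)⁻¹ ≤ energyH2 ν :=
    fun ν _ hν => Circle.inv_measure_le_energyH2 m hE.isClosed ν hν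
  have hprob : IsProbabilityMeasure ((m E)⁻¹ • m.restrict E) :=
    ProbabilityTheory.cond_isProbabilityMeasure hmE.ne'
  have hsupp : ((m E)⁻¹ • m.restrict E) Eᶜ = 0 := by
    simp [Measure.restrict_apply hE.measurableSet.compl]
  have henergy : energyH2 ((m E)⁻¹ • m.restrict E) = (m E)⁻¹ :=
    (Circle.energyH2_smul_restrict_le m hE.measurableSet).antisymm (hlower _ hprob hsupp)
  refine ⟨henergy, hlower, le_antisymm (iSup_le fun ν => ?_) ?_⟩
  · exact ENNReal.inv_le_iff_inv_le.mp (hlower ν ν.2.1 ν.2.2)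
  · simpa [henergy] using le_iSup (fun ν : {ν : Measure Circle // IsProbabilityMeasure ν ∧ ν Eᶜ = 0}
      => (energyH2 (ν : Measure Circle))⁻¹) ⟨_, hprob, hsupp⟩
end

section
/- Let μ be one-dimensional normalized Lebesgue measure on the circle C = {(z,0) : |z| = 1} ⊂ ∂𝔹₂ (the pushforward of normalized Haar measure on ∂𝔻 under z ↦ (z,0)). Then sup_{0≤r<1} ∫∫ |1/(1 − r²⟨z,w⟩)| dμ(w) dμ(z) = ∞; that is, μ has infinite energy with respect to the modulus of the Drury–Arveson kernel. -/
/-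
With `u = z / w`, one has `⟪(w,0), (z,0)⟫ = u`, so by rotation invariance of Haar measure the
double integral collapses to `∫ |1 - r² u|⁻¹ dm(u)`. Letting `r → 1`, Fatou's lemma bounds the
supremum below by `∫ |1 - u|⁻¹ dm(u) = (2π)⁻¹ ∫₀^{2π} |1 - e^{iθ}|⁻¹ dθ`, which diverges because
`|1 - e^{iθ}| ≤ |θ|` and `θ⁻¹` is not integrable at `0`.
-/

open MeasureTheory Complex
open scoped ENNReal

local notation "⟪" x ", " y "⟫" => @inner ℂ _ _ x y

noncomputable instance (d : ℕ) : MeasurableSpace (EuclideanSpace ℂ (Fin d)) := borel _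
instance (d : ℕ) : BorelSpace (EuclideanSpace ℂ (Fin d)) := ⟨rfl⟩

/-- The embedding `z ↦ (z,0)` of the unit circle into `ℂ²`. -/
noncomputable def iota2 : Circle → EuclideanSpace ℂ (Fin 2) :=
  fun z => (EuclideanSpace.equiv (Fin 2) ℂ).symm ![(z : ℂ), 0]

open Set Real Filter Topology

lemma setLIntegral_enorm_inv_Ioc_eq_top {b : ℝ} (hb : 0 < b) :
    ∫⁻ θ in Ioc 0 b, ‖θ⁻¹‖ₑ = ⊤ := by
  have h : ¬ IntegrableOn (fun θ : ℝ => θ⁻¹) (Ioc 0 b) := by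
    rw [← intervalIntegrable_iff_integrableOn_Ioc_of_le hb.le, intervalIntegrable_inv_iff]
    simp [hb.ne, hb.le]
  by_contra hfin
  exact h ⟨measurable_inv.aestronglyMeasurable, lt_top_iff_ne_top.2 hfin⟩

lemma enorm_inv_le_enorm_inv_one_sub_exp {θ : ℝ} (h0 : 0 < θ) (hπ : θ ≤ π) :
    ‖θ⁻¹‖ₑ ≤ ‖(1 - exp (θ * I))⁻¹‖ₑ := by
  have hne : exp (I * θ) - 1 ≠ 0 := by
    rw [← norm_ne_zero_iff, norm_exp_I_mul_ofReal_sub_one, norm_ne_zero_iff]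
    exact mul_ne_zero two_ne_zero (sin_pos_of_pos_of_lt_pi (by linarith) (by linarith)).ne'
  rw [enorm_inv h0.ne', enorm_inv (by rwa [mul_comm, ← neg_ne_zero, neg_sub]), enorm_sub_rev,
    mul_comm]
  exact ENNReal.inv_le_inv.2 enorm_exp_I_mul_ofReal_sub_one_le

instance : Fact (0 < 2 * π) := ⟨two_pi_pos⟩

lemma surjective_toCircle : Function.Surjective (AddCircle.toCircle (T := 2 * π)) := by
  intro u
  obtain ⟨x, hx⟩ := (AddCircle.homeomorphCircle two_pi_pos.ne').surjective u
  exact ⟨x, by rwa [AddCircle.homeomorphCircle_apply] at hx⟩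

instance : IsProbabilityMeasure (AddCircle.haarAddCircle.map (AddCircle.toCircle (T := 2 * π))) :=
  Measure.isProbabilityMeasure_map AddCircle.continuous_toCircle.aemeasurable

instance : (AddCircle.haarAddCircle.map (AddCircle.toCircle (T := 2 * π))).IsMulLeftInvariant := by
  have hmeas := AddCircle.continuous_toCircle (T := 2 * π) |>.measurable
  refine ⟨fun g => ?_⟩
  obtain ⟨a, rfl⟩ := surjective_toCircle g
  have hcomm : (AddCircle.toCircle a * ·) ∘ AddCircle.toCircle (T := 2 * π)
      = AddCircle.toCircle ∘ (a + ·) := by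
    ext x; simp [AddCircle.toCircle_add]
  rw [Measure.map_map (measurable_const_mul _) hmeas, hcomm,
    ← Measure.map_map hmeas (measurable_const_add _), map_add_left_eq_self]

instance : (AddCircle.haarAddCircle.map (AddCircle.toCircle (T := 2 * π))).IsHaarMeasure where
  toIsOpenPosMeasure := AddCircle.continuous_toCircle.isOpenPosMeasure_map surjective_toCircle

lemma lintegral_enorm_inv_one_sub_eq_top (m : Measure Circle) [m.IsHaarMeasure]
    [IsProbabilityMeasure m] : ∫⁻ u, ‖(1 - (u : ℂ))⁻¹‖ₑ ∂m = ⊤ := by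
  set g : Circle → ℝ≥0∞ := fun u => ‖(1 - (u : ℂ))⁻¹‖ₑ
  have hg : Measurable g := by fun_prop
  rw [Measure.isHaarMeasure_eq_of_isProbabilityMeasure m
    (AddCircle.haarAddCircle.map (AddCircle.toCircle (T := 2 * π))), lintegral_map hg
    AddCircle.continuous_toCircle.measurable]
  suffices hvol : ∫⁻ x : AddCircle (2 * π), g x.toCircle = ⊤ by
    rw [AddCircle.volume_eq_smul_haarAddCircle, lintegral_smul_measure] at hvol
    exact (ENNReal.mul_eq_top.1 hvol).elim (·.2) fun h => absurd h.1 ENNReal.ofReal_ne_top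
  rw [← AddCircle.lintegral_preimage _ 0, zero_add, eq_top_iff,
    ← setLIntegral_enorm_inv_Ioc_eq_top pi_pos]
  refine (setLIntegral_mono (hg.comp AddCircle.continuous_toCircle.measurable |>.comp
    AddCircle.measurable_mk') fun θ hθ => ?_).trans
    (lintegral_mono_set (Ioc_subset_Ioc_right (by linarith [pi_pos])))
  have hexp : (AddCircle.toCircle (θ : AddCircle (2 * π)) : ℂ) = exp (θ * I) := by
    rw [AddCircle.toCircle_apply_mk, div_self two_pi_pos.ne', one_mul, Circle.coe_exp]
  simpa [g, hexp] using enorm_inv_le_enorm_inv_one_sub_exp hθ.1 hθ.2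

lemma inner_iota2 (w z : Circle) : ⟪iota2 w, iota2 z⟫ = ((z / w : Circle) : ℂ) := by
  simp [iota2, PiLp.inner_apply, Fin.sum_univ_two, div_eq_mul_inv, ← Circle.coe_inv_eq_conj]

lemma measurableEmbedding_iota2 : MeasurableEmbedding iota2 := by
  have hinj : Function.Injective iota2 := fun a b h =>
    Circle.ext (by simpa [iota2] using congrArg (· 0) h)
  exact (Continuous.isClosedEmbedding (by unfold iota2; fun_prop) hinj).measurableEmbedding

lemma integral_integral_map_iota2 (m : Measure Circle) [m.IsHaarMeasure] [IsProbabilityMeasure m]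
    (f : ℂ → ℝ) :
    ∫ z, ∫ w, f ⟪w, z⟫ ∂(m.map iota2) ∂(m.map iota2) = ∫ u : Circle, f u ∂m := by
  simp only [measurableEmbedding_iota2.integral_map, inner_iota2,
    integral_div_left_eq_self (fun u : Circle => f u), integral_const, probReal_univ, one_smul]

lemma ofReal_integral_norm_inv_one_sub_mul (μ : Measure Circle) [IsFiniteMeasure μ] {c : ℂ}
    (hc : ‖c‖ < 1) :
    ENNReal.ofReal (∫ u, ‖(1 - c * u)⁻¹‖ ∂μ) = ∫⁻ u, ‖(1 - c * u)⁻¹‖ₑ ∂μ := by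
  have hne (u : Circle) : 1 - c * u ≠ 0 := by
    rw [sub_ne_zero]
    intro h
    have := congrArg norm h.symm
    simp only [norm_mul, Circle.norm_coe, mul_one, norm_one] at this
    exact hc.ne this
  have hcont : Continuous fun u : Circle => (1 - c * u)⁻¹ :=
    Continuous.inv₀ (by fun_prop) hne
  exact ofReal_integral_norm_eq_lintegral_enorm
    (hcont.integrable_of_hasCompactSupport (isClosed_tsupport _).isCompact)

lemma enorm_inv_one_sub_le_liminf {c : ℕ → ℂ} (hc : Tendsto c atTop (𝓝 1)) (u : ℂ) :
    ‖(1 - u)⁻¹‖ₑ ≤ liminf (fun n => ‖(1 - c n * u)⁻¹‖ₑ) atTop := by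
  rcases eq_or_ne u 1 with rfl | hu
  · simp -- `(1 - 1)⁻¹ = 0`
  have hlim : Tendsto (fun n => 1 - c n * u) atTop (𝓝 (1 - u)) := by
    simpa using tendsto_const_nhds.sub (hc.mul_const u)
  exact ((hlim.inv₀ (sub_ne_zero.2 hu.symm)).enorm).liminf_eq.ge

/-- Let `μ` be one-dimensional normalized Lebesgue measure on the circle
`C = {(z,0) : |z| = 1} ⊆ ∂𝔹₂`, i.e. the pushforward of normalized Haar measure on `∂𝔻`
under `z ↦ (z,0)`. Then `sup_{0≤r<1} ∫∫ |1/(1 − r²⟨z,w⟩)| dμ(w) dμ(z) = ∞`: `μ` has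
infinite energy with respect to the modulus of the Drury–Arveson kernel. -/
theorem stmt7 (m : Measure Circle) [m.IsHaarMeasure] [IsProbabilityMeasure m] :
    (⨆ r : {r : ℝ // 0 ≤ r ∧ r < 1},
        ENNReal.ofReal (∫ z, ∫ w, ‖((1 : ℂ) - ((r : ℝ) : ℂ) ^ 2 * ⟪w, z⟫)⁻¹‖
          ∂(m.map iota2) ∂(m.map iota2))) = ⊤ := by
  obtain ⟨r, -, hr01, hr⟩ := exists_seq_strictMono_tendsto' (zero_lt_one' ℝ)
  have hr2 : Tendsto (fun n => (r n : ℂ) ^ 2) atTop (𝓝 1) := by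
    simpa using ((continuous_ofReal.tendsto 1).comp hr).pow 2
  have hnorm (n : ℕ) : ‖(r n : ℂ) ^ 2‖ < 1 := by
    rw [norm_pow, norm_real, Real.norm_of_nonneg (hr01 n).1.le]
    exact pow_lt_one₀ (hr01 n).1.le (hr01 n).2 two_ne_zero
  refine top_unique ?_
  calc ⊤ = ∫⁻ u, ‖(1 - (u : ℂ))⁻¹‖ₑ ∂m := (lintegral_enorm_inv_one_sub_eq_top m).symm
    _ ≤ ∫⁻ u, liminf (fun n => ‖(1 - (r n : ℂ) ^ 2 * u)⁻¹‖ₑ) atTop ∂m :=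
        lintegral_mono fun u => enorm_inv_one_sub_le_liminf hr2 u
    _ ≤ liminf (fun n => ∫⁻ u, ‖(1 - (r n : ℂ) ^ 2 * u)⁻¹‖ₑ ∂m) atTop :=
        lintegral_liminf_le fun n => by fun_prop
    _ ≤ ⨆ n, ∫⁻ u, ‖(1 - (r n : ℂ) ^ 2 * u)⁻¹‖ₑ ∂m := (liminf_le_limsup).trans limsup_le_iSup
    _ ≤ _ := iSup_le fun n => le_iSup_of_le ⟨r n, (hr01 n).1.le, (hr01 n).2⟩ <| by
        rw [integral_integral_map_iota2 m fun v => ‖(1 - (r n : ℂ) ^ 2 * v)⁻¹‖,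
          ofReal_integral_norm_inv_one_sub_mul m (hnorm n)]
end

section
/- Let H be a reproducing kernel Hilbert space of functions on the unit ball 𝔹_d with real-valued non-negative continuous kernel k, let μ be a Borel probability measure on ∂𝔹_d, and let ψ : ∂𝔹_d → 𝔹_d be a Borel measurable map with values in a compact subset of 𝔹_d. Define T_ψ : H → L¹(μ) by (T_ψ f)(ζ) = f(ψ(ζ)). Then T_ψ is bounded and ‖T_ψ‖² = ∫∫ k(ψ(ζ), ψ(η)) dμ(η) dμ(ζ). -/
open MeasureTheory Complex

local notation "⟪" x ", " y "⟫" => @inner ℝ _ _ x y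

/-- Linearization of the Korányi maximal function: let `H` be a (real) reproducing kernel
Hilbert space on `𝔹_d`, encoded via its feature map `Φ` (so that the kernel is
`k(z,w) = ⟪Φ w, Φ z⟫` and evaluation is `f(z) = ⟪f, Φ z⟫`), with `k` real-valued,
non-negative and continuous on the ball. Let `μ` be a Borel probability measure on
`∂𝔹_d` and `ψ : ∂𝔹_d → 𝔹_d` Borel measurable with values in a compact subset of the
ball. Then `T_ψ : H → L¹(μ)`, `(T_ψ f)(ζ) = f(ψ(ζ))`, is bounded and
`‖T_ψ‖² = ∫∫ k(ψ(ζ),ψ(η)) dμ(η) dμ(ζ)`. -/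
theorem stmt10 (d : ℕ) (H : Type) [NormedAddCommGroup H] [InnerProductSpace ℝ H]
    [CompleteSpace H]
    (Φ : EuclideanSpace ℂ (Fin d) → H)
    (hΦc : ContinuousOn Φ (Metric.ball 0 1))
    (hk : ∀ z w : EuclideanSpace ℂ (Fin d), ‖z‖ < 1 → ‖w‖ < 1 → 0 ≤ ⟪Φ w, Φ z⟫)
    (μ : Measure (Metric.sphere (0 : EuclideanSpace ℂ (Fin d)) 1)) [IsProbabilityMeasure μ]
    (ψ : Metric.sphere (0 : EuclideanSpace ℂ (Fin d)) 1 → EuclideanSpace ℂ (Fin d))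
    (hψm : Measurable ψ) (L : ℝ) (hL : L < 1) (hψL : ∀ ζ, ‖ψ ζ‖ ≤ L) :
    (∀ f : H, (∫ ζ, |⟪f, Φ (ψ ζ)⟫| ∂μ) ≤
        Real.sqrt (∫ ζ, ∫ η, ⟪Φ (ψ η), Φ (ψ ζ)⟫ ∂μ ∂μ) * ‖f‖) ∧
    (⨆ f : {f : H // ‖f‖ ≤ 1}, ∫ ζ, |⟪(f : H), Φ (ψ ζ)⟫| ∂μ) ^ 2
      = ∫ ζ, ∫ η, ⟪Φ (ψ η), Φ (ψ ζ)⟫ ∂μ ∂μ := by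
  -- better constant
  set L' : ℝ := max L 0 with hL'def
  have hL' : L' < 1 := max_lt hL one_pos
  have hL'0 : (0 : ℝ) ≤ L' := le_max_right _ _
  have hψL' : ∀ ζ, ‖ψ ζ‖ ≤ L' := fun ζ => (hψL ζ).trans (le_max_left _ _)
  have hψball : ∀ ζ, ‖ψ ζ‖ < 1 := fun ζ => (hψL' ζ).trans_lt hL'
  set K : Set (EuclideanSpace ℂ (Fin d)) := Metric.closedBall 0 L' with hKdef
  have hKsub : K ⊆ Metric.ball 0 1 := by
    intro x hx
    simp only [hKdef, Metric.mem_closedBall, Metric.mem_ball, dist_zero_right] at *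
    exact hx.trans_lt hL'
  have hKcomp : IsCompact K := isCompact_closedBall _ _
  have hΦK : ContinuousOn Φ K := hΦc.mono hKsub
  set g : Metric.sphere (0 : EuclideanSpace ℂ (Fin d)) 1 → H := fun ζ => Φ (ψ ζ) with hgdef
  -- strong measurability of g
  have hgsm : StronglyMeasurable g := by
    have hψK : Measurable (fun ζ => (⟨ψ ζ, by
        simp only [hKdef, Metric.mem_closedBall, dist_zero_right]; exact hψL' ζ⟩ : K)) :=
      hψm.subtype_mk
    have hcont : Continuous (K.restrict Φ) := continuousOn_iff_continuous_restrict.mp hΦK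
    exact hcont.stronglyMeasurable.comp_measurable hψK
  obtain ⟨C, hC⟩ := hKcomp.exists_bound_of_continuousOn hΦK
  have hgC : ∀ ζ, ‖g ζ‖ ≤ C := fun ζ => hC _ (by
    simp only [hKdef, Metric.mem_closedBall, dist_zero_right]; exact hψL' ζ)
  have hgint : Integrable g μ :=
    Integrable.mono' (integrable_const C) hgsm.aestronglyMeasurable (ae_of_all _ hgC)
  -- nonnegativity of the kernel along ψ
  have knn : ∀ ζ η, 0 ≤ ⟪g η, g ζ⟫ := fun ζ η => hk _ _ (hψball ζ) (hψball η)
  -- helper: integrability of inner products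
  have intc : ∀ (x : H) (v : Metric.sphere (0 : EuclideanSpace ℂ (Fin d)) 1 → H), Integrable v μ →
      Integrable (fun ζ => ⟪v ζ, x⟫) μ := fun x v hv =>
    (((innerSL ℝ x).integrable_comp hv).congr (ae_of_all _ fun ζ => real_inner_comm _ _))
  have intc' : ∀ (x : H) (v : Metric.sphere (0 : EuclideanSpace ℂ (Fin d)) 1 → H), Integrable v μ →
      Integrable (fun ζ => ⟪x, v ζ⟫) μ := fun x v hv => (innerSL ℝ x).integrable_comp hv
  -- helper: interchange integral and inner product
  have icomm : ∀ (x : H) (v : Metric.sphere (0 : EuclideanSpace ℂ (Fin d)) 1 → H), Integrable v μ →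
      (∫ ζ, ⟪v ζ, x⟫ ∂μ) = ⟪∫ ζ, v ζ ∂μ, x⟫ := by
    intro x v hv
    calc ∫ ζ, ⟪v ζ, x⟫ ∂μ = ∫ ζ, (innerSL ℝ x) (v ζ) ∂μ := by
          congr 1; ext ζ; simp [real_inner_comm]
      _ = (innerSL ℝ x) (∫ ζ, v ζ ∂μ) := (innerSL ℝ x).integral_comp_comm hv
      _ = ⟪∫ ζ, v ζ ∂μ, x⟫ := real_inner_comm _ _
  set F : H := ∫ ζ, g ζ ∂μ with hFdef
  -- the double integral equals ⟪F, F⟫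
  have inner_eq : ∀ ζ, (∫ η, ⟪g η, g ζ⟫ ∂μ) = ⟪F, g ζ⟫ := fun ζ => icomm (g ζ) g hgint
  have D_eq : (∫ ζ, ∫ η, ⟪g η, g ζ⟫ ∂μ ∂μ) = ‖F‖ ^ 2 := by
    calc (∫ ζ, ∫ η, ⟪g η, g ζ⟫ ∂μ ∂μ) = ∫ ζ, ⟪F, g ζ⟫ ∂μ := by
          congr 1; ext ζ; exact inner_eq ζ
      _ = ∫ ζ, ⟪g ζ, F⟫ ∂μ := by congr 1; ext ζ; exact real_inner_comm _ _
      _ = ⟪F, F⟫ := icomm F g hgint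
      _ = ‖F‖ ^ 2 := real_inner_self_eq_norm_sq F
  have Dnn : (0:ℝ) ≤ ∫ ζ, ∫ η, ⟪g η, g ζ⟫ ∂μ ∂μ := D_eq ▸ sq_nonneg _
  have sqrtD : Real.sqrt (∫ ζ, ∫ η, ⟪g η, g ζ⟫ ∂μ ∂μ) = ‖F‖ := by
    rw [D_eq, Real.sqrt_sq (norm_nonneg _)]
  -- Part 1
  have part1 : ∀ f : H, (∫ ζ, |⟪f, g ζ⟫| ∂μ) ≤ ‖F‖ * ‖f‖ := by
    intro f
    set s : Metric.sphere (0 : EuclideanSpace ℂ (Fin d)) 1 → ℝ := fun ζ => if 0 ≤ ⟪f, g ζ⟫ then 1 else -1 with hsdef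
    have hs1 : ∀ ζ, s ζ = 1 ∨ s ζ = -1 := fun ζ => by
      by_cases h : 0 ≤ ⟪f, g ζ⟫ <;> simp [hsdef, h]
    have hssm : StronglyMeasurable s := by
      have : MeasurableSet {ζ | 0 ≤ ⟪f, g ζ⟫} := by
        have : Measurable (fun ζ => ⟪f, g ζ⟫) :=
          ((innerSL ℝ f).continuous.comp_stronglyMeasurable hgsm).measurable
        exact this measurableSet_Ici
      exact ((measurable_const.ite this measurable_const :
        Measurable s)).stronglyMeasurable
    set h : Metric.sphere (0 : EuclideanSpace ℂ (Fin d)) 1 → H := fun ζ => s ζ • g ζ with hhdef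
    have hhsm : StronglyMeasurable h := hssm.smul hgsm
    have hhC : ∀ ζ, ‖h ζ‖ ≤ C := fun ζ => by
      have : ‖h ζ‖ = ‖g ζ‖ := by
        rcases hs1 ζ with h1 | h1 <;> simp [hhdef, h1, norm_smul]
      rw [this]; exact hgC ζ
    have hhint : Integrable h μ :=
      Integrable.mono' (integrable_const C) hhsm.aestronglyMeasurable (ae_of_all _ hhC)
    set G : H := ∫ ζ, h ζ ∂μ with hGdef
    -- |⟪f, g ζ⟫| = ⟪f, h ζ⟫
    have habs : ∀ ζ, |⟪f, g ζ⟫| = ⟪f, h ζ⟫ := by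
      intro ζ
      by_cases hc : 0 ≤ ⟪f, g ζ⟫
      · simp [hhdef, hsdef, hc, real_inner_smul_right, _root_.abs_of_nonneg hc]
      · simp [hhdef, hsdef, hc, real_inner_smul_right, abs_of_neg (lt_of_not_ge hc)]
    -- ‖G‖ ≤ ‖F‖
    have hGF : ‖G‖ ≤ ‖F‖ := by
      have key : ⟪G, G⟫ ≤ ⟪F, F⟫ := by
        have inner_eq_h : ∀ ζ, (∫ η, ⟪h η, h ζ⟫ ∂μ) = ⟪G, h ζ⟫ := fun ζ =>
          icomm (h ζ) h hhint
        have step : ∀ ζ, ⟪G, h ζ⟫ ≤ ⟪F, g ζ⟫ := by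
          intro ζ
          rw [← inner_eq_h ζ, ← inner_eq ζ]
          refine integral_mono (intc (h ζ) h hhint) (intc (g ζ) g hgint) ?_
          intro η
          show ⟪h η, h ζ⟫ ≤ ⟪g η, g ζ⟫
          have heq : ⟪h η, h ζ⟫ = s η * (s ζ * ⟪g η, g ζ⟫) := by
            simp [hhdef, real_inner_smul_left, real_inner_smul_right]; ring
          rw [heq]
          rcases hs1 η with h1 | h1 <;> rcases hs1 ζ with h2 | h2 <;>
            simp [h1, h2] <;> linarith [knn ζ η]
        calc ⟪G, G⟫ = ∫ ζ, ⟪G, h ζ⟫ ∂μ := by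
              rw [show (∫ ζ, ⟪G, h ζ⟫ ∂μ) = ∫ ζ, ⟪h ζ, G⟫ ∂μ from by
                congr 1; ext ζ; exact real_inner_comm _ _, icomm G h hhint]
          _ ≤ ∫ ζ, ⟪F, g ζ⟫ ∂μ :=
              integral_mono (intc' G h hhint) (intc' F g hgint) step
          _ = ⟪F, F⟫ := by
              rw [show (∫ ζ, ⟪F, g ζ⟫ ∂μ) = ∫ ζ, ⟪g ζ, F⟫ ∂μ from by
                congr 1; ext ζ; exact real_inner_comm _ _, icomm F g hgint]
      have : ‖G‖ ^ 2 ≤ ‖F‖ ^ 2 := by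
        rwa [real_inner_self_eq_norm_sq, real_inner_self_eq_norm_sq] at key
      have := Real.sqrt_le_sqrt this
      rwa [Real.sqrt_sq (norm_nonneg _), Real.sqrt_sq (norm_nonneg _)] at this
    calc (∫ ζ, |⟪f, g ζ⟫| ∂μ) = ∫ ζ, ⟪f, h ζ⟫ ∂μ := by congr 1; ext ζ; exact habs ζ
      _ = ⟪f, G⟫ := by
          rw [show (∫ ζ, ⟪f, h ζ⟫ ∂μ) = ∫ ζ, ⟪h ζ, f⟫ ∂μ from by
            congr 1; ext ζ; exact real_inner_comm _ _, icomm f h hhint]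
          exact real_inner_comm _ _
      _ ≤ ‖f‖ * ‖G‖ := real_inner_le_norm f G
      _ ≤ ‖f‖ * ‖F‖ := mul_le_mul_of_nonneg_left hGF (norm_nonneg f)
      _ = ‖F‖ * ‖f‖ := mul_comm _ _
  refine ⟨fun f => by rw [sqrtD]; exact part1 f, ?_⟩
  -- Part 2
  have hFnn : ∀ ζ, 0 ≤ ⟪F, g ζ⟫ := by
    intro ζ
    rw [← inner_eq ζ]
    exact integral_nonneg (fun η => knn ζ η)
  set f₀ : {f : H // ‖f‖ ≤ 1} := ⟨‖F‖⁻¹ • F, by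
    rw [norm_smul, norm_inv, norm_norm]
    rcases eq_or_ne (‖F‖) 0 with h | h
    · simp [h]
    · rw [inv_mul_cancel₀ h]⟩ with hf₀def
  have hval : (∫ ζ, |⟪(f₀ : H), g ζ⟫| ∂μ) = ‖F‖ := by
    have : ∀ ζ, |⟪(f₀ : H), g ζ⟫| = ‖F‖⁻¹ * ⟪F, g ζ⟫ := by
      intro ζ
      rw [hf₀def]
      simp only [real_inner_smul_left]
      rw [abs_mul, _root_.abs_of_nonneg (hFnn ζ),
        _root_.abs_of_nonneg (inv_nonneg.mpr (norm_nonneg F))]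
    calc (∫ ζ, |⟪(f₀ : H), g ζ⟫| ∂μ) = ∫ ζ, ‖F‖⁻¹ * ⟪F, g ζ⟫ ∂μ := by
          congr 1; ext ζ; exact this ζ
      _ = ‖F‖⁻¹ * ∫ ζ, ⟪F, g ζ⟫ ∂μ := integral_const_mul _ _
      _ = ‖F‖⁻¹ * ‖F‖ ^ 2 := by
          rw [show (∫ ζ, ⟪F, g ζ⟫ ∂μ) = ∫ ζ, ⟪g ζ, F⟫ ∂μ from by
            congr 1; ext ζ; exact real_inner_comm _ _, icomm F g hgint,
            real_inner_self_eq_norm_sq]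
      _ = ‖F‖ := by
          rcases eq_or_ne (‖F‖) 0 with h | h
          · simp [h]
          · field_simp [h]
  have hbdd : BddAbove (Set.range fun f : {f : H // ‖f‖ ≤ 1} =>
      ∫ ζ, |⟪(f : H), g ζ⟫| ∂μ) := by
    refine ⟨‖F‖, ?_⟩
    rintro x ⟨f, rfl⟩
    calc (∫ ζ, |⟪(f : H), g ζ⟫| ∂μ) ≤ ‖F‖ * ‖(f : H)‖ := part1 f
      _ ≤ ‖F‖ * 1 := mul_le_mul_of_nonneg_left f.2 (norm_nonneg F)
      _ = ‖F‖ := mul_one _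
  haveI : Nonempty {f : H // ‖f‖ ≤ 1} := ⟨⟨0, by simp⟩⟩
  have hsup : (⨆ f : {f : H // ‖f‖ ≤ 1}, ∫ ζ, |⟪(f : H), g ζ⟫| ∂μ) = ‖F‖ := by
    apply le_antisymm
    · refine ciSup_le fun f => ?_
      calc (∫ ζ, |⟪(f : H), g ζ⟫| ∂μ) ≤ ‖F‖ * ‖(f : H)‖ := part1 f
        _ ≤ ‖F‖ * 1 := mul_le_mul_of_nonneg_left f.2 (norm_nonneg F)
        _ = ‖F‖ := mul_one _
    · rw [← hval]
      exact le_ciSup hbdd f₀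
  rw [hsup, D_eq]
end

section
/- Let X be a compact metric space and cap the capacity generated by an energy functional, with outer capacity cap*. Then for arbitrary sets E₁, E₂ ⊂ X one has cap(E₁ ∪ E₂) ≤ cap(E₁) + cap*(E₂), where cap denotes inner capacity. -/
open MeasureTheory
open scoped NNReal ENNReal

/-- Capacity of a set `F` generated by an energy functional `I` on positive measures:
`cap(F) = sup { 1/I(μ,μ) : μ a probability measure supported on F }`. -/
noncomputable def capC {X : Type} [TopologicalSpace X] [MeasurableSpace X]
    (I : Measure X → Measure X → ℝ≥0∞) (F : Set X) : ℝ≥0∞ :=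
  ⨆ μ : {μ : ProbabilityMeasure X // (μ : Measure X) Fᶜ = 0},
    (I (μ : ProbabilityMeasure X) (μ : ProbabilityMeasure X))⁻¹

/-- Inner capacity of an arbitrary set, by approximation from within by compact sets. -/
noncomputable def capInner {X : Type} [TopologicalSpace X] [MeasurableSpace X]
    (I : Measure X → Measure X → ℝ≥0∞) (E : Set X) : ℝ≥0∞ :=
  ⨆ F : {F : Set X // IsCompact F ∧ F ⊆ E}, capC I (F : Set X)

/-- Outer capacity of an arbitrary set, by approximation from outside by open sets. -/
noncomputable def capOuter {X : Type} [TopologicalSpace X] [MeasurableSpace X]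
    (I : Measure X → Measure X → ℝ≥0∞) (E : Set X) : ℝ≥0∞ :=
  ⨅ G : {G : Set X // IsOpen G ∧ E ⊆ G}, capInner I (G : Set X)

/-!
Let `μ` be a probability measure on a compact `F ⊆ E₁ ∪ G` with `G` open. For disjoint pieces
`K₁, K₂` of `F`, bi-additivity and positivity of `I` give
`I(μ|K₁, μ|K₁) + I(μ|K₂, μ|K₂) ≤ I(μ, μ)`, and Titu's inequality then yields
`(μ K₁ + μ K₂)² / I(μ, μ) ≤ cap K₁ + cap K₂`. Take `K₁ = F \ G`, a compact subset of `E₁`, and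
`K₂` a compact subset of `F ∩ G`; by inner regularity the masses `μ K₂` exhaust `μ (F ∩ G)`, so
`1 / I(μ, μ) ≤ cap E₁ + cap G`. Taking the infimum over open `G ⊇ E₂` gives the claim.
-/

theorem ENNReal.add_sq_div_add_le (a b c d : ℝ≥0∞) :
    (a + b) ^ 2 / (c + d) ≤ a ^ 2 / c + b ^ 2 / d := by
  rcases eq_or_ne c ⊤ with rfl | hc
  · simp
  rcases eq_or_ne d ⊤ with rfl | hd
  · simp
  rcases eq_or_ne c 0 with rfl | hc₀
  · rcases eq_or_ne a 0 with rfl | ha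
    · simp
    · simp [ENNReal.div_zero (pow_ne_zero 2 ha)]
  rcases eq_or_ne d 0 with rfl | hd₀
  · rcases eq_or_ne b 0 with rfl | hb
    · simp
    · simp [ENNReal.div_zero (pow_ne_zero 2 hb)]
  rcases eq_or_ne a ⊤ with rfl | ha
  · simp [ENNReal.top_pow, ENNReal.top_div_of_ne_top hc]
  rcases eq_or_ne b ⊤ with rfl | hb
  · simp [ENNReal.top_pow, ENNReal.top_div_of_ne_top hd]
  lift a to ℝ≥0 using ha
  lift b to ℝ≥0 using hb
  lift c to ℝ≥0 using hc
  lift d to ℝ≥0 using hd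
  simp only [ne_eq, ENNReal.coe_eq_zero] at hc₀ hd₀
  have hcd : c + d ≠ 0 := by simp [hc₀]
  rw [← ENNReal.coe_add, ← ENNReal.coe_add, ← ENNReal.coe_pow, ← ENNReal.coe_pow,
    ← ENNReal.coe_pow, ← ENNReal.coe_div hcd, ← ENNReal.coe_div hc₀, ← ENNReal.coe_div hd₀,
    ← ENNReal.coe_add, ENNReal.coe_le_coe]
  simpa [Fin.sum_univ_two] using Finset.sq_sum_div_le_sum_sq_div Finset.univ ![a, b]
    (g := ![c, d]) (by simp [Fin.forall_fin_two, pos_iff_ne_zero, hc₀, hd₀])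

section Energy

variable {X : Type} [MeasurableSpace X] {I : Measure X → Measure X → ℝ≥0∞}

theorem energy_add_left
    (hlin : ∀ (t : ℝ≥0) (μ ρ ν : Measure X),
      I ((t : ℝ≥0∞) • μ + ρ) ν = (t : ℝ≥0∞) * I μ ν + I ρ ν)
    (μ ρ ν : Measure X) : I (μ + ρ) ν = I μ ν + I ρ ν := by
  simpa using hlin 1 μ ρ ν

variable (hsymm : ∀ μ ν, I μ ν = I ν μ)
  (hlin : ∀ (t : ℝ≥0) (μ ρ ν : Measure X),
    I ((t : ℝ≥0∞) • μ + ρ) ν = (t : ℝ≥0∞) * I μ ν + I ρ ν)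
include hsymm hlin

theorem add_energy_le_energy_add (μ ρ : Measure X) :
    I μ μ + I ρ ρ ≤ I (μ + ρ) (μ + ρ) := by
  have hcross : ∀ ν ν' : Measure X, I ν ν ≤ I ν (ν + ν') := fun ν ν' => by
    rw [hsymm ν (ν + ν'), energy_add_left hlin]
    exact le_self_add
  calc I μ μ + I ρ ρ ≤ I μ (μ + ρ) + I ρ (ρ + μ) := add_le_add (hcross μ ρ) (hcross ρ μ)
    _ = I (μ + ρ) (μ + ρ) := by rw [add_comm ρ μ, energy_add_left hlin]

/-- The inequality, not an equality, is all `hlin` gives: `I 0 ν` may be `⊤`. -/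
theorem sq_mul_energy_le_energy_smul (t : ℝ≥0) (ν : Measure X) :
    (t : ℝ≥0∞) ^ 2 * I ν ν ≤ I ((t : ℝ≥0∞) • ν) ((t : ℝ≥0∞) • ν) := by
  have hscale : ∀ ν' : Measure X, (t : ℝ≥0∞) * I ν ν' ≤ I ((t : ℝ≥0∞) • ν) ν' := fun ν' => by
    have h := hlin t ν 0 ν'
    rw [add_zero] at h
    rw [h]
    exact le_self_add
  calc (t : ℝ≥0∞) ^ 2 * I ν ν = (t : ℝ≥0∞) * ((t : ℝ≥0∞) * I ν ν) := by ring
    _ ≤ (t : ℝ≥0∞) * I ν ((t : ℝ≥0∞) • ν) := by gcongr; rw [hsymm ν (_ • ν)]; exact hscale ν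
    _ ≤ I ((t : ℝ≥0∞) • ν) ((t : ℝ≥0∞) • ν) := hscale _

end Energy

section Capacity

open Set

variable {X : Type} [TopologicalSpace X] [MeasurableSpace X] {I : Measure X → Measure X → ℝ≥0∞}

theorem inv_energy_le_capC {ν : Measure X} [IsProbabilityMeasure ν] {K : Set X}
    (hνK : ν Kᶜ = 0) : (I ν ν)⁻¹ ≤ capC I K :=
  le_iSup_of_le (⟨⟨ν, inferInstance⟩, hνK⟩ : {μ : ProbabilityMeasure X // (μ : Measure X) Kᶜ = 0})
    le_rfl

theorem capC_le_capInner {K E : Set X} (hK : IsCompact K) (hKE : K ⊆ E) :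
    capC I K ≤ capInner I E :=
  le_iSup_of_le (⟨K, hK, hKE⟩ : {F : Set X // IsCompact F ∧ F ⊆ E}) le_rfl

theorem capInner_mono {E E' : Set X} (h : E ⊆ E') : capInner I E ≤ capInner I E' :=
  iSup_le fun ⟨_, hK, hKE⟩ => capC_le_capInner hK (hKE.trans h)

variable (hsymm : ∀ μ ν, I μ ν = I ν μ)
  (hlin : ∀ (t : ℝ≥0) (μ ρ ν : Measure X),
    I ((t : ℝ≥0∞) • μ + ρ) ν = (t : ℝ≥0∞) * I μ ν + I ρ ν)
include hsymm hlin

theorem sq_measure_univ_div_energy_le_capC {ρ : Measure X} [IsFiniteMeasure ρ] {K : Set X}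
    (hρK : ρ Kᶜ = 0) : ρ univ ^ 2 / I ρ ρ ≤ capC I K := by
  rcases eq_or_ne ρ 0 with rfl | hρ
  · simp
  have : NeZero ρ := ⟨hρ⟩
  set ν := (ρ univ)⁻¹ • ρ
  set s := (ρ univ).toNNReal
  have hs : (s : ℝ≥0∞) = ρ univ := ENNReal.coe_toNNReal (measure_ne_top ρ univ)
  have hs₀ : (s : ℝ≥0∞) ^ 2 ≠ 0 := by simp [hs, hρ]
  have hρν : ρ = (s : ℝ≥0∞) • ν := by
    rw [hs, smul_smul, ENNReal.mul_inv_cancel (Measure.measure_univ_ne_zero.2 hρ) (measure_ne_top ρ univ),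
      one_smul]
  have hνK : ν Kᶜ = 0 := by simp [ν, hρK]
  calc ρ univ ^ 2 / I ρ ρ = (s : ℝ≥0∞) ^ 2 / I ((s : ℝ≥0∞) • ν) ((s : ℝ≥0∞) • ν) := by
        rw [← hρν, hs]
    _ ≤ (s : ℝ≥0∞) ^ 2 / ((s : ℝ≥0∞) ^ 2 * I ν ν) :=
        ENNReal.div_le_div_left (sq_mul_energy_le_energy_smul hsymm hlin s ν) _
    _ = (I ν ν)⁻¹ := by
        rw [div_eq_mul_inv, ENNReal.mul_inv (Or.inl hs₀) (Or.inl (by simp)), ← mul_assoc,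
          ENNReal.mul_inv_cancel hs₀ (by simp), one_mul]
    _ ≤ capC I K := inv_energy_le_capC hνK

theorem sq_add_div_energy_le_capC_add {μ : Measure X} [IsFiniteMeasure μ] {K₁ K₂ : Set X}
    (h₁ : MeasurableSet K₁) (h₂ : MeasurableSet K₂) (hd : Disjoint K₁ K₂) :
    (μ K₁ + μ K₂) ^ 2 / I μ μ ≤ capC I K₁ + capC I K₂ := by
  set ρ₁ := μ.restrict K₁
  set ρ₂ := μ.restrict K₂
  have hsplit : I ρ₁ ρ₁ + I ρ₂ ρ₂ ≤ I μ μ := by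
    have hμ : μ = (ρ₁ + ρ₂) + μ.restrict (K₁ ∪ K₂)ᶜ := by
      rw [← Measure.restrict_union hd h₂, Measure.restrict_add_restrict_compl (h₁.union h₂)]
    calc I ρ₁ ρ₁ + I ρ₂ ρ₂ ≤ I (ρ₁ + ρ₂) (ρ₁ + ρ₂) := add_energy_le_energy_add hsymm hlin ρ₁ ρ₂
      _ ≤ I (ρ₁ + ρ₂) (ρ₁ + ρ₂) + I (μ.restrict (K₁ ∪ K₂)ᶜ) (μ.restrict (K₁ ∪ K₂)ᶜ) :=
          le_self_add
      _ ≤ I μ μ := by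
          conv_rhs => rw [hμ]
          exact add_energy_le_energy_add hsymm hlin _ _
  have hpiece : ∀ {K : Set X}, MeasurableSet K →
      μ K ^ 2 / I (μ.restrict K) (μ.restrict K) ≤ capC I K := fun {K} hK => by
    simpa using sq_measure_univ_div_energy_le_capC hsymm hlin (ρ := μ.restrict K)
      (by rw [Measure.restrict_apply hK.compl]; simp)
  calc (μ K₁ + μ K₂) ^ 2 / I μ μ ≤ (μ K₁ + μ K₂) ^ 2 / (I ρ₁ ρ₁ + I ρ₂ ρ₂) :=
        ENNReal.div_le_div_left hsplit _
    _ ≤ μ K₁ ^ 2 / I ρ₁ ρ₁ + μ K₂ ^ 2 / I ρ₂ ρ₂ := ENNReal.add_sq_div_add_le _ _ _ _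
    _ ≤ capC I K₁ + capC I K₂ := add_le_add (hpiece h₁) (hpiece h₂)

end Capacity

section InnerRegular

open Set

variable {X : Type} [TopologicalSpace X] [PolishSpace X] [MeasurableSpace X] [BorelSpace X]
  {I : Measure X → Measure X → ℝ≥0∞}
  (hsymm : ∀ μ ν, I μ ν = I ν μ)
  (hlin : ∀ (t : ℝ≥0) (μ ρ ν : Measure X),
    I ((t : ℝ≥0∞) • μ + ρ) ν = (t : ℝ≥0∞) * I μ ν + I ρ ν)
include hsymm hlin

theorem inv_energy_le_capInner_add_of_isOpen {E G F : Set X} (hG : IsOpen G) (hF : IsCompact F)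
    (hFEG : F ⊆ E ∪ G) {μ : Measure X} [IsProbabilityMeasure μ] (hμF : μ Fᶜ = 0) :
    (I μ μ)⁻¹ ≤ capInner I E + capInner I G := by
  have hFm : MeasurableSet F := hF.isClosed.measurableSet
  have hmass : μ (F \ G) + μ (F ∩ G) = 1 := by
    rw [measure_sdiff_add_inter F hG.measurableSet, ← prob_compl_eq_zero_iff hFm, hμF]
  have hinner : μ (F ∩ G) = ⨆ K : {K : Set X // K ⊆ F ∩ G ∧ IsCompact K}, μ K := by
    rw [(hFm.inter hG.measurableSet).measure_eq_iSup_isCompact μ]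
    simp_rw [iSup_and', iSup_subtype']
  have hbound : ∀ K : {K : Set X // K ⊆ F ∩ G ∧ IsCompact K},
      (μ (F \ G) + μ K) ^ 2 / I μ μ ≤ capInner I E + capInner I G := fun ⟨K, hKFG, hK⟩ =>
    (sq_add_div_energy_le_capC_add hsymm hlin (hFm.diff hG.measurableSet)
      hK.isClosed.measurableSet (disjoint_sdiff_left.mono_right (hKFG.trans inter_subset_right))).trans
    (add_le_add (capC_le_capInner (hF.diff hG) fun x hx => (hFEG hx.1).resolve_right hx.2)
      (capC_le_capInner hK (hKFG.trans inter_subset_right)))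
  have : Nonempty {K : Set X // K ⊆ F ∩ G ∧ IsCompact K} :=
    ⟨⟨∅, empty_subset _, isCompact_empty⟩⟩
  calc (I μ μ)⁻¹ = (μ (F \ G) + μ (F ∩ G)) ^ 2 / I μ μ := by rw [hmass, one_pow, one_div]
    _ = ⨆ K : {K : Set X // K ⊆ F ∩ G ∧ IsCompact K}, (μ (F \ G) + μ K) ^ 2 / I μ μ := by
        rw [hinner, ENNReal.add_iSup, (pow_left_mono 2).map_iSup_of_continuousAt
          (ENNReal.continuous_pow 2).continuousAt (by simp), ENNReal.iSup_div]
    _ ≤ capInner I E + capInner I G := iSup_le hbound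

theorem capInner_union_le_of_isOpen (E : Set X) {G : Set X} (hG : IsOpen G) :
    capInner I (E ∪ G) ≤ capInner I E + capInner I G :=
  iSup_le fun ⟨_, hF, hFEG⟩ => iSup_le fun ⟨_, hμF⟩ =>
    inv_energy_le_capInner_add_of_isOpen hsymm hlin hG hF hFEG hμF

end InnerRegular

theorem stmt15_general {X : Type} [MetricSpace X] [CompactSpace X] [MeasurableSpace X] [BorelSpace X]
    (I : Measure X → Measure X → ℝ≥0∞)
    (hsymm : ∀ μ ν, I μ ν = I ν μ)
    (hlin : ∀ (t : ℝ≥0) (μ ρ ν : Measure X),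
      I ((t : ℝ≥0∞) • μ + ρ) ν = (t : ℝ≥0∞) * I μ ν + I ρ ν)
    (E₁ E₂ : Set X) :
    capInner I (E₁ ∪ E₂) ≤ capInner I E₁ + capOuter I E₂ := by
  rw [capOuter, ENNReal.add_iInf]
  refine le_iInf fun ⟨G, hG, hE₂G⟩ => ?_
  calc capInner I (E₁ ∪ E₂) ≤ capInner I (E₁ ∪ G) :=
        capInner_mono (Set.union_subset_union_right E₁ hE₂G)
    _ ≤ capInner I E₁ + capInner I G := capInner_union_le_of_isOpen hsymm hlin E₁ hG

/-- Strong subadditivity mixing inner and outer capacity: for a capacity generated by a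
symmetric, bi-additive, positively homogeneous, weak*-lower-semicontinuous energy
functional `I` on a compact metric space `X` (with the finite-energy cone closed under
restriction to compact sets), arbitrary sets `E₁, E₂ ⊆ X` satisfy
`cap(E₁ ∪ E₂) ≤ cap(E₁) + cap*(E₂)`, where `cap` is the inner capacity. -/
theorem stmt15 {X : Type} [MetricSpace X] [CompactSpace X] [MeasurableSpace X] [BorelSpace X]
    (I : Measure X → Measure X → ℝ≥0∞)
    (hsymm : ∀ μ ν, I μ ν = I ν μ)
    (hlin : ∀ (t : ℝ≥0) (μ ρ ν : Measure X),
      I ((t : ℝ≥0∞) • μ + ρ) ν = (t : ℝ≥0∞) * I μ ν + I ρ ν)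
    (hrest : ∀ (μ : Measure X) (F : Set X), IsCompact F → I μ μ < ⊤ →
      I (μ.restrict F) (μ.restrict F) < ⊤)
    (hlsc : LowerSemicontinuous fun μ : ProbabilityMeasure X => I μ μ)
    (E₁ E₂ : Set X) :
    capInner I (E₁ ∪ E₂) ≤ capInner I E₁ + capOuter I E₂ :=
  stmt15_general I hsymm hlin E₁ E₂
end
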